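/- arXiv:1910.14232 — 5 statements merged into one kernel-verified Lean document; each statement's English description precedes it below -/
import Mathlib

section
/- Let n ≥ 4 be an integer and let u be a smooth function on an open subset of ℝ^{n+1}. Then pointwise L₄(u) = (1/2)·div(|∇u|²∇u) − ((n−3)/16)·[ u·Δ(|∇u|²) − div((Δ(u²))·∇u) ]. (This is the divergence-form expression for the conformally covariant cubic operator L₄ on a Ricci-flat — here Euclidean — background.) -/
open MeasureTheory Metric

noncomputable section

local notation "⟪" x ", " y "⟫" => @inner ℝ _ _ x y

abbrev Euc (m : ℕ) : Type := EuclideanSpace ℝ (Fin m)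

variable {m : ℕ}

def stdv (m : ℕ) (i : Fin m) : Euc m := EuclideanSpace.single i (1 : ℝ)

def grad (u : Euc m → ℝ) (x : Euc m) : Euc m := gradient u x

def hessVec (u : Euc m → ℝ) (x v : Euc m) : Euc m := fderiv ℝ (gradient u) x v

def hess (u : Euc m → ℝ) (x v w : Euc m) : ℝ := ⟪hessVec u x v, w⟫

def lap (u : Euc m → ℝ) (x : Euc m) : ℝ := ∑ i, hess u x (stdv m i) (stdv m i)

def hessNormSq (u : Euc m → ℝ) (x : Euc m) : ℝ :=
  ∑ i, ∑ j, (hess u x (stdv m i) (stdv m j)) ^ 2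

def divg (V : Euc m → Euc m) (x : Euc m) : ℝ :=
  ∑ i, fderiv ℝ (fun y => V y i) x (stdv m i)

def etaD (u : Euc m → ℝ) (x : Euc m) : ℝ := ⟪x, grad u x⟫

def tgrad (u : Euc m → ℝ) (x : Euc m) : Euc m := grad u x - etaD u x • x

def SmoothNearBall (u : Euc m → ℝ) : Prop :=
  ∃ U : Set (Euc m), IsOpen U ∧ closedBall (0 : Euc m) 1 ⊆ U ∧ ContDiffOn ℝ (⊤ : ℕ∞) u U

/-- boundary Laplacian on the unit sphere `Sⁿ ⊂ ℝⁿ⁺¹` -/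
def blap (n : ℕ) (u : Euc (n+1) → ℝ) (x : Euc (n+1)) : ℝ :=
  lap u x - (n : ℝ) * etaD u x - hess u x x x

def sigma1 (n : ℕ) (u : Euc (n+1) → ℝ) (x : Euc (n+1)) : ℝ :=
  -(((n:ℝ)-3)/4) * u x * lap u x - (((n:ℝ)+1)/4) * ‖grad u x‖^2

/-- the tensor `T₁(u)` as a bilinear form -/
def T1b (n : ℕ) (u : Euc (n+1) → ℝ) (x v w : Euc (n+1)) : ℝ :=
  (sigma1 n u x + (1/2) * ‖grad u x‖^2) * ⟪v, w⟫
    + (((n:ℝ)-3)/4) * u x * hess u x v w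
    - (((n:ℝ)+1)/4) * ⟪grad u x, v⟫ * ⟪grad u x, w⟫

/-- the tensor `T₁(u)` applied to a vector, i.e. the vector `T₁(u)(·,X)` -/
def T1app (n : ℕ) (u : Euc (n+1) → ℝ) (x X : Euc (n+1)) : Euc (n+1) :=
  (sigma1 n u x + (1/2) * ‖grad u x‖^2) • X
    + ((((n:ℝ)-3)/4) * u x) • hessVec u x X
    - ((((n:ℝ)+1)/4) * ⟪grad u x, X⟫) • grad u x

def Hb (n : ℕ) (u : Euc (n+1) → ℝ) (x : Euc (n+1)) : ℝ :=
  etaD u x + (((n:ℝ)-3)/4) * u x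

def L4 (n : ℕ) (u : Euc (n+1) → ℝ) (x : Euc (n+1)) : ℝ :=
  (((n:ℝ)-3)/8) * u x * (lap u x)^2 - (((n:ℝ)-3)/8) * u x * hessNormSq u x
    + (((n:ℝ)-1)/4) * ‖grad u x‖^2 * lap u x
    + (((n:ℝ)+1)/4) * hess u x (grad u x) (grad u x)

def B3 (n : ℕ) (u : Euc (n+1) → ℝ) (x : Euc (n+1)) : ℝ :=
  Hb n u x * T1b n u x x x + ((n:ℝ)/3) * (Hb n u x)^3

def E2 (n : ℕ) (u : Euc (n+1) → ℝ) : ℝ :=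
  (∫ x in closedBall (0 : Euc (n+1)) 1, u x * L4 n u x)
    + ∫ x in sphere (0 : Euc (n+1)) 1, u x * B3 n u x ∂μH[(n:ℝ)]

/-- total surface measure of the sphere `Sⁿ ⊂ ℝⁿ⁺¹` -/
def omegaN (n : ℕ) : ℝ := (μH[(n:ℝ)] (sphere (0 : Euc (n+1)) 1)).toReal

def memC1 (n : ℕ) (u : Euc (n+1) → ℝ) : Prop :=
  SmoothNearBall u ∧ (∀ x ∈ closedBall (0 : Euc (n+1)) 1, 0 ≤ sigma1 n u x)
    ∧ ∀ x ∈ sphere (0 : Euc (n+1)) 1, 0 < Hb n u x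

def memV (n : ℕ) (u : Euc (n+1) → ℝ) : Prop :=
  SmoothNearBall u ∧ (∀ x ∈ closedBall (0 : Euc (n+1)) 1, 0 < u x)
    ∧ (∫ x in sphere (0 : Euc (n+1)) 1, u x ^ ((4*(n:ℝ))/((n:ℝ)-3)) ∂μH[(n:ℝ)]) = omegaN n

/-- the normalized path `u_t` through `u` in the direction `v` -/
def pathU (n : ℕ) (u v : Euc (n+1) → ℝ) (t : ℝ) : Euc (n+1) → ℝ :=
  fun x => omegaN n ^ (((n:ℝ)-3)/(4*(n:ℝ)))
    * ((∫ y in sphere (0 : Euc (n+1)) 1,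
          |(1 + t * v y) * u y| ^ ((4*(n:ℝ))/((n:ℝ)-3)) ∂μH[(n:ℝ)]) ^ (((n:ℝ)-3)/(4*(n:ℝ))))⁻¹
    * ((1 + t * v x) * u x)

/-- `u` is a local minimizer of `E₂ : V → ℝ` -/
def IsLocalMinE2 (n : ℕ) (u : Euc (n+1) → ℝ) : Prop :=
  ∀ v : Euc (n+1) → ℝ, SmoothNearBall v →
    IsLocalMin (fun t : ℝ => E2 n (pathU n u v t)) 0

/-- the polarization `L₄(w,u,u)` -/
def L4pol (n : ℕ) (u w : Euc (n+1) → ℝ) (x : Euc (n+1)) : ℝ :=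
  (1/3) * deriv (fun t : ℝ => L4 n (fun y => u y + t * w y) x) 0

/-- the polarization `B₃(w,u,u)` -/
def B3pol (n : ℕ) (u w : Euc (n+1) → ℝ) (x : Euc (n+1)) : ℝ :=
  (1/3) * deriv (fun t : ℝ => B3 n (fun y => u y + t * w y) x) 0

/- ### four-dimensional (critical) objects -/

def L43 (u v w : Euc 4 → ℝ) (x : Euc 4) : ℝ :=
  divg (fun y => ⟪grad u y, grad v y⟫ • grad w y
    + ⟪grad u y, grad w y⟫ • grad v y
    + ⟪grad v y, grad w y⟫ • grad u y) x

def L42 (u v : Euc 4 → ℝ) (x : Euc 4) : ℝ :=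
  -(1/2) * (lap (fun y => ⟪grad u y, grad v y⟫) x
    - divg (fun y => lap u y • grad v y + lap v y • grad u y) x)

def B33 (u v w : Euc 4 → ℝ) (x : Euc 4) : ℝ :=
  -(⟪grad u x, grad v x⟫ * etaD w x + ⟪grad u x, grad w x⟫ * etaD v x
    + ⟪grad v x, grad w x⟫ * etaD u x)

def B32 (u v : Euc 4 → ℝ) (x : Euc 4) : ℝ :=
  -(blap 3 u x * etaD v x + blap 3 v x * etaD u x)
    - ⟪tgrad u x, tgrad v x⟫ - 3 * etaD u x * etaD v x

def B31 (u : Euc 4 → ℝ) (x : Euc 4) : ℝ := -(blap 3 u x)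

/-- total surface measure of `S³ ⊂ ℝ⁴` -/
def omega3 : ℝ := (μH[(3:ℝ)] (sphere (0 : Euc 4) 1)).toReal

def F2 (u : Euc 4 → ℝ) : ℝ :=
  -(1/4) * (∫ x in closedBall (0 : Euc 4) 1,
      ((1/2) * ‖grad u x‖^4 + ‖grad u x‖^2 * lap u x))
    + ∫ x in sphere (0 : Euc 4) 1,
      ((1/4) * ‖tgrad u x‖^2 * etaD u x + (1/12) * (etaD u x)^3
        + (1/2) * ‖tgrad u x‖^2 + u x) ∂μH[(3:ℝ)]

def G2 (u : Euc 4 → ℝ) : ℝ :=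
  F2 u - (omega3/3) * Real.log
    ((∫ x in sphere (0 : Euc 4) 1, Real.exp (3 * u x) ∂μH[(3:ℝ)]) / omega3)

def memC1crit (u : Euc 4 → ℝ) : Prop :=
  SmoothNearBall u ∧ (∀ x ∈ closedBall (0 : Euc 4) 1, 0 ≤ -lap u x - ‖grad u x‖^2)
    ∧ ∀ x ∈ sphere (0 : Euc 4) 1, 0 < etaD u x + 1

/-- `u` is a local minimizer of `G₂ : C^∞(B) → ℝ` -/
def IsLocalMinG2 (u : Euc 4 → ℝ) : Prop :=
  ∀ v : Euc 4 → ℝ, SmoothNearBall v →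
    IsLocalMin (fun t : ℝ => G2 (fun x => u x + t * v x)) 0

/-- the critical (four-dimensional) `σ₁` -/
def sigma1c (u : Euc 4 → ℝ) (x : Euc 4) : ℝ := -lap u x - ‖grad u x‖^2

/-- the critical (four-dimensional) `T₁(u)` as a bilinear form -/
def T1c (u : Euc 4 → ℝ) (x v w : Euc 4) : ℝ :=
  hess u x v w - ⟪grad u x, v⟫ * ⟪grad u x, w⟫
    - (lap u x + (1/2) * ‖grad u x‖^2) * ⟪v, w⟫

section AuxStatement4

variable {m : ℕ} {U : Set (Euc m)} {x : Euc m}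

lemma aux_inner_grad (f : Euc m → ℝ) (x v : Euc m) : ⟪grad f x, v⟫ = fderiv ℝ f x v := by
  simp [grad, gradient, InnerProductSpace.toDual_symm_apply]

lemma aux_grad_apply (f : Euc m → ℝ) (x : Euc m) (i : Fin m) :
    grad f x i = fderiv ℝ f x (stdv m i) := by
  rw [← aux_inner_grad]
  simp [stdv, EuclideanSpace.inner_single_right, real_inner_comm]

lemma aux_normsq_eq (v : Euc m) : ‖v‖^2 = ∑ i, (v i)^2 := by
  rw [EuclideanSpace.norm_eq, Real.sq_sqrt (Finset.sum_nonneg fun i _ => by positivity)]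
  simp [Real.norm_eq_abs, sq_abs]

lemma aux_decomp (v : Euc m) : v = ∑ i, v i • stdv m i := by
  ext j
  rw [WithLp.ofLp_sum, Finset.sum_apply]
  simp [stdv, EuclideanSpace.single_apply]

lemma aux_fderiv_applyCLM {F : Type*} [NormedAddCommGroup F] [NormedSpace ℝ F]
    (g : Euc m → (F →L[ℝ] ℝ)) {x : Euc m} (hg : DifferentiableAt ℝ g x) (w : F) (v : Euc m) :
    fderiv ℝ (fun y => g y w) x v = fderiv ℝ g x v w := by
  have h := ((ContinuousLinearMap.apply ℝ ℝ w).hasFDerivAt.comp x hg.hasFDerivAt).fderiv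
  rw [show (fun y => g y w) = (ContinuousLinearMap.apply ℝ ℝ w) ∘ g from rfl, h]
  rfl

lemma aux_hessVec_eq (f : Euc m → ℝ) (x v : Euc m) :
    hessVec f x v = (InnerProductSpace.toDual ℝ (Euc m)).symm (fderiv ℝ (fderiv ℝ f) x v) := by
  have h : gradient f = ⇑(InnerProductSpace.toDual ℝ (Euc m)).symm ∘ fderiv ℝ f := rfl
  rw [hessVec, h, LinearIsometryEquiv.comp_fderiv]
  rfl

lemma aux_hess_eq (f : Euc m → ℝ) (x v w : Euc m) :
    hess f x v w = fderiv ℝ (fderiv ℝ f) x v w := by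
  rw [hess, aux_hessVec_eq, InnerProductSpace.toDual_symm_apply]

lemma aux_contDiffOn_fderiv_apply {k : ℕ} {f : Euc m → ℝ} (hU : IsOpen U)
    (hf : ContDiffOn ℝ (k+1) f U) (w : Euc m) :
    ContDiffOn ℝ k (fun y => fderiv ℝ f y w) U := by
  have h1 : ContDiffOn ℝ k (fderiv ℝ f) U := hf.fderiv_of_isOpen hU le_rfl
  exact (ContinuousLinearMap.apply ℝ ℝ w).contDiff.comp_contDiffOn h1

lemma aux_diffAt {F : Type*} [NormedAddCommGroup F] [NormedSpace ℝ F]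
    {k : ℕ} {f : Euc m → F} (hU : IsOpen U)
    (hf : ContDiffOn ℝ (k+1) f U) (hx : x ∈ U) : DifferentiableAt ℝ f x := by
  have : (1 : WithTop ℕ∞) ≤ (k+1 : ℕ) := by exact_mod_cast Nat.succ_le_succ (Nat.zero_le k)
  exact ((hf.differentiableOn (by simp)).differentiableAt (hU.mem_nhds hx))

lemma aux_hess_eq' {f : Euc m → ℝ} (hU : IsOpen U) (hf : ContDiffOn ℝ 5 f U)
    (hx : x ∈ U) (v w : Euc m) :
    hess f x v w = fderiv ℝ (fun y => fderiv ℝ f y w) x v := by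
  have hdf : ContDiffOn ℝ 4 (fderiv ℝ f) U := hf.fderiv_of_isOpen hU (by norm_num)
  have hdiff : DifferentiableAt ℝ (fderiv ℝ f) x :=
    (hdf.differentiableOn (by norm_num)).differentiableAt (hU.mem_nhds hx)
  rw [aux_hess_eq, aux_fderiv_applyCLM _ hdiff]

lemma aux_hess_symm {f : Euc m → ℝ} (hU : IsOpen U) (hf : ContDiffOn ℝ 5 f U)
    (hx : x ∈ U) (v w : Euc m) :
    hess f x v w = hess f x w v := by
  rw [aux_hess_eq, aux_hess_eq]
  exact (hf.contDiffAt (hU.mem_nhds hx)).isSymmSndFDerivAt (by norm_num) v w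

lemma aux_fderiv_mul {f g : Euc m → ℝ} {x : Euc m} (hf : DifferentiableAt ℝ f x)
    (hg : DifferentiableAt ℝ g x) (v : Euc m) :
    fderiv ℝ (fun y => f y * g y) x v = fderiv ℝ f x v * g x + f x * fderiv ℝ g x v := by
  rw [fderiv_fun_mul hf hg]
  simp only [ContinuousLinearMap.add_apply, ContinuousLinearMap.smul_apply, smul_eq_mul]
  ring

lemma aux_fderiv_sq {f : Euc m → ℝ} {x : Euc m} (hf : DifferentiableAt ℝ f x) (v : Euc m) :
    fderiv ℝ (fun y => (f y)^2) x v = 2 * f x * fderiv ℝ f x v := by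
  have h : (fun y => (f y)^2) = fun y => f y * f y := by
    funext y; rw [pow_two]
  rw [h, aux_fderiv_mul hf hf]
  ring

/-- first partial derivatives as functions -/
def pD (u : Euc m → ℝ) (i : Fin m) : Euc m → ℝ := fun y => fderiv ℝ u y (stdv m i)

/-- second partial derivatives as functions -/
def qD (u : Euc m → ℝ) (i j : Fin m) : Euc m → ℝ := fun y => fderiv ℝ (pD u j) y (stdv m i)

variable {u : Euc m → ℝ}

lemma aux_gradsq (u : Euc m → ℝ) (y : Euc m) : ‖grad u y‖^2 = ∑ j, (pD u j y)^2 := by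
  rw [aux_normsq_eq]
  exact Finset.sum_congr rfl fun j _ => by rw [aux_grad_apply]; rfl

end AuxStatement4
section AuxStatement4b

variable {m : ℕ} {U : Set (Euc m)} {x : Euc m} {u : Euc m → ℝ}

lemma aux_pD_smooth (hU : IsOpen U) (hu : ContDiffOn ℝ 9 u U) (i : Fin m) :
    ContDiffOn ℝ 8 (pD u i) U := by
  have := aux_contDiffOn_fderiv_apply (k := 8) hU (hu.of_le (by norm_num)) (stdv m i)
  exact this

lemma aux_qD_smooth (hU : IsOpen U) (hu : ContDiffOn ℝ 9 u U) (i j : Fin m) :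
    ContDiffOn ℝ 7 (qD u i j) U :=
  aux_contDiffOn_fderiv_apply (k := 7) hU ((aux_pD_smooth hU hu j).of_le (by norm_num)) (stdv m i)

lemma aux_u_diff (hU : IsOpen U) (hu : ContDiffOn ℝ 9 u U) (hx : x ∈ U) :
    DifferentiableAt ℝ u x := aux_diffAt (k := 8) hU (hu.of_le (by norm_num)) hx

lemma aux_pD_diff (hU : IsOpen U) (hu : ContDiffOn ℝ 9 u U) (hx : x ∈ U) (i : Fin m) :
    DifferentiableAt ℝ (pD u i) x :=
  aux_diffAt (k := 7) hU ((aux_pD_smooth hU hu i).of_le (by norm_num)) hx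

lemma aux_qD_diff (hU : IsOpen U) (hu : ContDiffOn ℝ 9 u U) (hx : x ∈ U) (i j : Fin m) :
    DifferentiableAt ℝ (qD u i j) x :=
  aux_diffAt (k := 6) hU ((aux_qD_smooth hU hu i j).of_le (by norm_num)) hx

/-- the Hessian in coordinates -/
lemma aux_hess_pq (hU : IsOpen U) (hu : ContDiffOn ℝ 9 u U) (hx : x ∈ U) (i j : Fin m) :
    hess u x (stdv m i) (stdv m j) = qD u i j x :=
  aux_hess_eq' hU (hu.of_le (by norm_num)) hx _ _

lemma aux_lap_eq (hU : IsOpen U) (hu : ContDiffOn ℝ 9 u U) (hx : x ∈ U) :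
    lap u x = ∑ i, qD u i i x :=
  Finset.sum_congr rfl fun i _ => aux_hess_pq hU hu hx i i

lemma aux_hessNormSq_eq (hU : IsOpen U) (hu : ContDiffOn ℝ 9 u U) (hx : x ∈ U) :
    hessNormSq u x = ∑ i, ∑ j, (qD u i j x)^2 :=
  Finset.sum_congr rfl fun i _ => Finset.sum_congr rfl fun j _ => by
    rw [aux_hess_pq hU hu hx]

lemma aux_qD_symm (hU : IsOpen U) (hu : ContDiffOn ℝ 9 u U) (hx : x ∈ U) (i j : Fin m) :
    qD u i j x = qD u j i x := by
  rw [← aux_hess_pq hU hu hx, ← aux_hess_pq hU hu hx,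
    aux_hess_symm hU (hu.of_le (by norm_num)) hx]

/-- Hessian of the gradient-vector contraction -/
lemma aux_hess_grad_grad (hU : IsOpen U) (hu : ContDiffOn ℝ 9 u U) (hx : x ∈ U) :
    hess u x (grad u x) (grad u x) = ∑ i, ∑ j, pD u i x * pD u j x * qD u i j x := by
  set B := fderiv ℝ (fderiv ℝ u) x with hBdef
  have step : ∀ (T : Euc m →L[ℝ] ℝ), T (grad u x) = ∑ j, grad u x j * T (stdv m j) := by
    intro T
    conv_lhs => rw [aux_decomp (grad u x)]
    rw [map_sum]
    exact Finset.sum_congr rfl fun j _ => by rw [_root_.map_smul, smul_eq_mul]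
  have hB : hess u x (grad u x) (grad u x) = (B (grad u x)) (grad u x) := aux_hess_eq u x _ _
  rw [hB, step (B (grad u x))]
  have h2 : ∀ j, (B (grad u x)) (stdv m j) = ∑ i, grad u x i * (B (stdv m i)) (stdv m j) := by
    intro j
    have : (B (grad u x)) (stdv m j) = (B.flip (stdv m j)) (grad u x) := rfl
    rw [this, step (B.flip (stdv m j))]
    rfl
  calc ∑ j, grad u x j * (B (grad u x)) (stdv m j)
      = ∑ j, ∑ i, grad u x j * (grad u x i * (B (stdv m i)) (stdv m j)) := by
        refine Finset.sum_congr rfl fun j _ => ?_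
        rw [h2 j, Finset.mul_sum]
    _ = ∑ i, ∑ j, pD u i x * pD u j x * qD u i j x := by
        rw [Finset.sum_comm]
        refine Finset.sum_congr rfl fun i _ => Finset.sum_congr rfl fun j _ => ?_
        have e1 : grad u x i = pD u i x := aux_grad_apply u x i
        have e2 : grad u x j = pD u j x := aux_grad_apply u x j
        have e3 : (B (stdv m i)) (stdv m j) = qD u i j x := by
          rw [← aux_hess_eq, aux_hess_pq hU hu hx]
        rw [e1, e2, e3]
        ring

end AuxStatement4b
section AuxStatement4c

variable {m : ℕ} {U : Set (Euc m)} {x : Euc m} {u : Euc m → ℝ}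

lemma aux_fderiv_sum {ι : Type*} [Fintype ι] {A : ι → Euc m → ℝ} {x : Euc m}
    (h : ∀ i, DifferentiableAt ℝ (A i) x) (v : Euc m) :
    fderiv ℝ (fun y => ∑ i, A i y) x v = ∑ i, fderiv ℝ (A i) x v := by
  rw [fderiv_fun_sum (fun i _ => h i)]
  simp

lemma aux_fderiv_const_mul {f : Euc m → ℝ} {x : Euc m} (hf : DifferentiableAt ℝ f x)
    (c : ℝ) (v : Euc m) :
    fderiv ℝ (fun y => c * f y) x v = c * fderiv ℝ f x v := by
  rw [fderiv_const_mul hf]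
  simp

lemma aux_fderiv_add {f g : Euc m → ℝ} {x : Euc m} (hf : DifferentiableAt ℝ f x)
    (hg : DifferentiableAt ℝ g x) (v : Euc m) :
    fderiv ℝ (fun y => f y + g y) x v = fderiv ℝ f x v + fderiv ℝ g x v := by
  rw [fderiv_fun_add hf hg]
  simp

/-- swap of the last two indices in the third derivative -/
lemma aux_r23 (hU : IsOpen U) (hu : ContDiffOn ℝ 9 u U) (hx : x ∈ U) (a b : Fin m) (v : Euc m) :
    fderiv ℝ (qD u a b) x v = fderiv ℝ (qD u b a) x v := by
  have hev : qD u a b =ᶠ[nhds x] qD u b a := by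
    filter_upwards [hU.mem_nhds hx] with y hy using aux_qD_symm hU hu hy a b
  rw [hev.fderiv_eq]

/-- swap of the first two indices in the third derivative -/
lemma aux_r12 (hU : IsOpen U) (hu : ContDiffOn ℝ 9 u U) (hx : x ∈ U) (a b c : Fin m) :
    fderiv ℝ (qD u a b) x (stdv m c) = fderiv ℝ (qD u c b) x (stdv m a) := by
  have hpb : ContDiffOn ℝ 8 (pD u b) U := aux_pD_smooth hU hu b
  have hdpb : DifferentiableAt ℝ (fderiv ℝ (pD u b)) x := by
    have h8 : ContDiffOn ℝ ((6+1)+1 : ℕ) (pD u b) U := hpb.of_le (by norm_num)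
    have h7 : ContDiffOn ℝ ((6:ℕ)+1) (fderiv ℝ (pD u b)) U :=
      h8.fderiv_of_isOpen hU (by exact_mod_cast le_rfl)
    exact aux_diffAt (k := 6) hU h7 hx
  have key : ∀ a c : Fin m, fderiv ℝ (qD u a b) x (stdv m c)
      = fderiv ℝ (fderiv ℝ (pD u b)) x (stdv m c) (stdv m a) := by
    intro a c
    exact aux_fderiv_applyCLM (fderiv ℝ (pD u b)) hdpb (stdv m a) (stdv m c)
  rw [key, key]
  exact ((hpb.contDiffAt (hU.mem_nhds hx)).isSymmSndFDerivAt (by norm_num)) _ _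

lemma aux_hr (hU : IsOpen U) (hu : ContDiffOn ℝ 9 u U) (hx : x ∈ U) :
    (∑ i, ∑ j, pD u j x * fderiv ℝ (qD u i j) x (stdv m i))
      = ∑ i, ∑ j, pD u i x * fderiv ℝ (qD u j j) x (stdv m i) := by
  rw [Finset.sum_comm]
  refine Finset.sum_congr rfl fun i _ => Finset.sum_congr rfl fun j _ => ?_
  -- goal: pD u i x * fderiv (qD u j i) x (e j) = pD u i x * fderiv (qD u j j) x (e i)
  congr 1
  rw [aux_r23 hU hu hx j i, aux_r12 hU hu hx i j j]

lemma aux_fderiv_g2 (hU : IsOpen U) (hu : ContDiffOn ℝ 9 u U) {y : Euc m} (hy : y ∈ U)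
    (v : Euc m) :
    fderiv ℝ (fun z => ‖grad u z‖^2) y v = ∑ j, 2 * pD u j y * fderiv ℝ (pD u j) y v := by
  have hfun : (fun z : Euc m => ‖grad u z‖^2) = fun z => ∑ j, (pD u j z)^2 :=
    funext (aux_gradsq u)
  rw [hfun, aux_fderiv_sum (fun j => (aux_pD_diff hU hu hy j).fun_pow 2)]
  exact Finset.sum_congr rfl fun j _ => aux_fderiv_sq (aux_pD_diff hU hu hy j) v

lemma aux_cA (hU : IsOpen U) (hu : ContDiffOn ℝ 9 u U) (hx : x ∈ U) :
    divg (fun y => ‖grad u y‖^2 • grad u y) x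
      = ∑ i, ((∑ j, 2 * pD u j x * qD u i j x) * pD u i x
          + (∑ j, (pD u j x)^2) * qD u i i x) := by
  unfold divg
  refine Finset.sum_congr rfl fun i _ => ?_
  have hfun : (fun y => (‖grad u y‖^2 • grad u y) i)
      = fun y => (∑ j, (pD u j y)^2) * pD u i y := by
    funext y
    rw [PiLp.smul_apply, smul_eq_mul, aux_gradsq, aux_grad_apply]
    rfl
  rw [hfun]
  have hS : DifferentiableAt ℝ (fun y => ∑ j, (pD u j y)^2) x :=
    DifferentiableAt.fun_sum fun j _ => (aux_pD_diff hU hu hx j).fun_pow 2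
  rw [aux_fderiv_mul hS (aux_pD_diff hU hu hx i)]
  have hfd : fderiv ℝ (fun y => ∑ j, (pD u j y)^2) x (stdv m i)
      = ∑ j, 2 * pD u j x * qD u i j x := by
    rw [aux_fderiv_sum (fun j => (aux_pD_diff hU hu hx j).fun_pow 2)]
    exact Finset.sum_congr rfl fun j _ => aux_fderiv_sq (aux_pD_diff hU hu hx j) _
  rw [hfd]
  rfl

lemma aux_cB (hU : IsOpen U) (hu : ContDiffOn ℝ 9 u U) (hx : x ∈ U) :
    lap (fun y => ‖grad u y‖^2) x
      = ∑ i, ∑ j, (2 * (qD u i j x)^2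
          + 2 * pD u j x * fderiv ℝ (qD u i j) x (stdv m i)) := by
  have hg2 : ContDiffOn ℝ 5 (fun y : Euc m => ‖grad u y‖^2) U := by
    have hfun : (fun y : Euc m => ‖grad u y‖^2) = fun y => ∑ j, (pD u j y)^2 :=
      funext (aux_gradsq u)
    rw [hfun]
    exact ContDiffOn.sum fun j _ => ((aux_pD_smooth hU hu j).of_le (by norm_num)).pow 2
  unfold lap
  refine Finset.sum_congr rfl fun i _ => ?_
  rw [aux_hess_eq' hU hg2 hx]
  have hev : (fun y => fderiv ℝ (fun z : Euc m => ‖grad u z‖^2) y (stdv m i))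
      =ᶠ[nhds x] (fun y => ∑ j, 2 * pD u j y * qD u i j y) := by
    filter_upwards [hU.mem_nhds hx] with y hy
    rw [aux_fderiv_g2 hU hu hy]
    rfl
  rw [hev.fderiv_eq]
  rw [aux_fderiv_sum (fun j => ((aux_pD_diff hU hu hx j).const_mul 2).fun_mul
    (aux_qD_diff hU hu hx i j))]
  refine Finset.sum_congr rfl fun j _ => ?_
  rw [aux_fderiv_mul ((aux_pD_diff hU hu hx j).const_mul 2) (aux_qD_diff hU hu hx i j),
    aux_fderiv_const_mul (aux_pD_diff hU hu hx j)]
  have h1 : fderiv ℝ (pD u j) x (stdv m i) = qD u i j x := rfl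
  rw [h1]
  ring

lemma aux_cC (hU : IsOpen U) (hu : ContDiffOn ℝ 9 u U) {y : Euc m} (hy : y ∈ U) :
    lap (fun z => (u z)^2) y = ∑ j, (2 * (pD u j y)^2 + 2 * u y * qD u j j y) := by
  have hu2 : ContDiffOn ℝ 5 (fun z => (u z)^2) U := (hu.of_le (by norm_num)).pow 2
  unfold lap
  refine Finset.sum_congr rfl fun j _ => ?_
  rw [aux_hess_eq' hU hu2 hy]
  have hev : (fun z => fderiv ℝ (fun w => (u w)^2) z (stdv m j))
      =ᶠ[nhds y] (fun z => 2 * u z * pD u j z) := by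
    filter_upwards [hU.mem_nhds hy] with z hz
    exact aux_fderiv_sq (aux_u_diff hU hu hz) _
  rw [hev.fderiv_eq]
  rw [show (fun z => 2 * u z * pD u j z) = (fun z => (2 * u z) * pD u j z) from rfl,
    aux_fderiv_mul ((aux_u_diff hU hu hy).const_mul 2) (aux_pD_diff hU hu hy j),
    aux_fderiv_const_mul (aux_u_diff hU hu hy)]
  have h1 : fderiv ℝ u y (stdv m j) = pD u j y := rfl
  have h2 : fderiv ℝ (pD u j) y (stdv m j) = qD u j j y := rfl
  rw [h1, h2]
  ring

lemma aux_cD (hU : IsOpen U) (hu : ContDiffOn ℝ 9 u U) (hx : x ∈ U) :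
    divg (fun y => lap (fun z => (u z)^2) y • grad u y) x
      = ∑ i, ((∑ j, (4 * pD u j x * qD u i j x + 2 * pD u i x * qD u j j x
            + 2 * u x * fderiv ℝ (qD u j j) x (stdv m i))) * pD u i x
          + (∑ j, (2 * (pD u j x)^2 + 2 * u x * qD u j j x)) * qD u i i x) := by
  unfold divg
  refine Finset.sum_congr rfl fun i _ => ?_
  have hA : ∀ j, DifferentiableAt ℝ (fun y => 2 * (pD u j y)^2 + 2 * u y * qD u j j y) x :=
    fun j => (((aux_pD_diff hU hu hx j).fun_pow 2).const_mul 2).add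
      (((aux_u_diff hU hu hx).const_mul 2).fun_mul (aux_qD_diff hU hu hx j j))
  have hev : (fun y => (lap (fun z => (u z)^2) y • grad u y) i)
      =ᶠ[nhds x] (fun y => (∑ j, (2 * (pD u j y)^2 + 2 * u y * qD u j j y)) * pD u i y) := by
    filter_upwards [hU.mem_nhds hx] with y hy
    rw [PiLp.smul_apply, smul_eq_mul, aux_cC hU hu hy, aux_grad_apply]
    rfl
  rw [hev.fderiv_eq]
  have hS : DifferentiableAt ℝ
      (fun y => ∑ j, (2 * (pD u j y)^2 + 2 * u y * qD u j j y)) x :=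
    DifferentiableAt.fun_sum fun j _ => hA j
  rw [aux_fderiv_mul hS (aux_pD_diff hU hu hx i)]
  have hfd : fderiv ℝ (fun y => ∑ j, (2 * (pD u j y)^2 + 2 * u y * qD u j j y)) x (stdv m i)
      = ∑ j, (4 * pD u j x * qD u i j x + 2 * pD u i x * qD u j j x
          + 2 * u x * fderiv ℝ (qD u j j) x (stdv m i)) := by
    rw [aux_fderiv_sum hA]
    refine Finset.sum_congr rfl fun j _ => ?_
    rw [aux_fderiv_add (((aux_pD_diff hU hu hx j).fun_pow 2).const_mul 2)
      (((aux_u_diff hU hu hx).const_mul 2).fun_mul (aux_qD_diff hU hu hx j j)),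
      aux_fderiv_const_mul ((aux_pD_diff hU hu hx j).fun_pow 2),
      aux_fderiv_sq (aux_pD_diff hU hu hx j),
      aux_fderiv_mul ((aux_u_diff hU hu hx).const_mul 2) (aux_qD_diff hU hu hx j j),
      aux_fderiv_const_mul (aux_u_diff hU hu hx)]
    have h1 : fderiv ℝ (pD u j) x (stdv m i) = qD u i j x := rfl
    have h2 : fderiv ℝ u x (stdv m i) = pD u i x := rfl
    rw [h1, h2]
    ring
  rw [hfd]
  rfl

lemma key_algebra {ι : Type*} [Fintype ι] (c a : ℝ) (p : ι → ℝ) (q : ι → ι → ℝ)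
    (r : ι → ι → ι → ℝ)
    (hr : (∑ i, ∑ j, p j * r i i j) = ∑ i, ∑ j, p i * r i j j) :
    c/8 * a * (∑ i, q i i)^2 - c/8 * a * (∑ i, ∑ j, (q i j)^2)
      + (c+2)/4 * ((∑ i, (p i)^2) * (∑ i, q i i))
      + (c+4)/4 * (∑ i, ∑ j, p i * p j * q i j)
    = 1/2 * (∑ i, ((∑ j, 2 * p j * q i j) * p i + (∑ j, (p j)^2) * q i i))
      - c/16 * (a * (∑ i, ∑ j, (2 * (q i j)^2 + 2 * p j * r i i j))
        - ∑ i, ((∑ j, (4 * p j * q i j + 2 * p i * q j j + 2 * a * r i j j)) * p i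
             + (∑ j, (2 * (p j)^2 + 2 * a * q j j)) * q i i)) := by
  have hA : (∑ i, q i i)^2 = ∑ i, ∑ j, q i i * q j j := by
    rw [sq, Finset.sum_mul_sum]
  have hC : (∑ i, (p i)^2) * (∑ i, q i i) = ∑ i, ∑ j, (p i)^2 * q j j := by
    rw [Finset.sum_mul_sum]
  have hCc : (∑ i, ∑ j, (p j)^2 * q i i) = ∑ i, ∑ j, (p i)^2 * q j j := Finset.sum_comm
  have hAc : (∑ i, ∑ j, q j j * q i i) = ∑ i, ∑ j, q i i * q j j := Finset.sum_comm
  have h1 : ∑ i, ((∑ j, 2 * p j * q i j) * p i + (∑ j, (p j)^2) * q i i)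
      = 2 * (∑ i, ∑ j, p i * p j * q i j) + ∑ i, ∑ j, (p i)^2 * q j j := by
    rw [Finset.sum_add_distrib, ← hCc]
    congr 1
    · rw [Finset.mul_sum]
      refine Finset.sum_congr rfl fun i _ => ?_
      rw [Finset.sum_mul, Finset.mul_sum]
      exact Finset.sum_congr rfl fun j _ => by ring
    · exact Finset.sum_congr rfl fun i _ => by rw [Finset.sum_mul]
  have pull : ∀ (k : ℝ) (f : ι → ι → ℝ), (∑ i, ∑ j, k * f i j) = k * ∑ i, ∑ j, f i j := by
    intro k f
    rw [Finset.mul_sum]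
    exact Finset.sum_congr rfl fun i _ => (Finset.mul_sum _ _ _).symm
  have h2 : (∑ i, ∑ j, (2 * (q i j)^2 + 2 * p j * r i i j))
      = 2 * (∑ i, ∑ j, (q i j)^2) + 2 * (∑ i, ∑ j, p i * r i j j) := by
    have e : (∑ i, ∑ j, (2 * (q i j)^2 + 2 * p j * r i i j))
        = (∑ i, ∑ j, 2 * ((q i j)^2)) + ∑ i, ∑ j, 2 * (p j * r i i j) := by
      simp only [← Finset.sum_add_distrib]
      exact Finset.sum_congr rfl fun i _ => Finset.sum_congr rfl fun j _ => by ring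
    rw [e, pull 2, pull 2, hr]
  have h3 : ∑ i, ((∑ j, (4 * p j * q i j + 2 * p i * q j j + 2 * a * r i j j)) * p i
             + (∑ j, (2 * (p j)^2 + 2 * a * q j j)) * q i i)
      = 4 * (∑ i, ∑ j, p i * p j * q i j) + 2 * (∑ i, ∑ j, (p i)^2 * q j j)
        + 2 * a * (∑ i, ∑ j, p i * r i j j)
        + 2 * (∑ i, ∑ j, (p i)^2 * q j j) + 2 * a * (∑ i, ∑ j, q i i * q j j) := by
    have e1 : ∀ i, (∑ j, (4 * p j * q i j + 2 * p i * q j j + 2 * a * r i j j)) * p i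
        = ∑ j, (4 * (p i * p j * q i j) + 2 * ((p i)^2 * q j j) + 2 * a * (p i * r i j j)) := by
      intro i
      rw [Finset.sum_mul]
      exact Finset.sum_congr rfl fun j _ => by ring
    have e2 : ∀ i, (∑ j, (2 * (p j)^2 + 2 * a * q j j)) * q i i
        = ∑ j, (2 * ((p j)^2 * q i i) + 2 * a * (q j j * q i i)) := by
      intro i
      rw [Finset.sum_mul]
      exact Finset.sum_congr rfl fun j _ => by ring
    calc ∑ i, ((∑ j, (4 * p j * q i j + 2 * p i * q j j + 2 * a * r i j j)) * p i
             + (∑ j, (2 * (p j)^2 + 2 * a * q j j)) * q i i)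
        = ∑ i, ∑ j, (4 * (p i * p j * q i j) + 2 * ((p i)^2 * q j j)
            + 2 * a * (p i * r i j j) + (2 * ((p j)^2 * q i i) + 2 * a * (q j j * q i i))) := by
          refine Finset.sum_congr rfl fun i _ => ?_
          rw [e1, e2, ← Finset.sum_add_distrib]
      _ = (∑ i, ∑ j, 4 * (p i * p j * q i j)) + (∑ i, ∑ j, 2 * ((p i)^2 * q j j))
            + (∑ i, ∑ j, 2 * a * (p i * r i j j))
            + ((∑ i, ∑ j, 2 * ((p j)^2 * q i i)) + ∑ i, ∑ j, 2 * a * (q j j * q i i)) := by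
          simp only [Finset.sum_add_distrib]
      _ = _ := by
          rw [pull 4, pull 2, pull (2*a), pull 2, pull (2*a), hCc, hAc]
          ring
  rw [hA, hC, h1, h2, h3]
  ring

end AuxStatement4c

/-- divergence-form expression for `L₄` on a flat background. -/
theorem statement4 (n : ℕ) (hn : 4 ≤ n) (U : Set (Euc (n+1))) (hU : IsOpen U)
    (u : Euc (n+1) → ℝ) (hu : ContDiffOn ℝ (⊤ : ℕ∞) u U) (x : Euc (n+1)) (hx : x ∈ U) :
    L4 n u x = (1/2) * divg (fun y => ‖grad u y‖^2 • grad u y) x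
      - (((n:ℝ)-3)/16) * (u x * lap (fun y => ‖grad u y‖^2) x
        - divg (fun y => lap (fun z => (u z)^2) y • grad u y) x) := by
  have hu9 : ContDiffOn ℝ 9 u U := hu.of_le (WithTop.coe_le_coe.mpr le_top)
  have hr := aux_hr hU hu9 hx
  unfold L4
  rw [aux_lap_eq hU hu9 hx, aux_hessNormSq_eq hU hu9 hx, aux_gradsq u x,
    aux_hess_grad_grad hU hu9 hx, aux_cA hU hu9 hx, aux_cB hU hu9 hx, aux_cD hU hu9 hx]
  linear_combination key_algebra ((n:ℝ)-3) (u x) (fun i => pD u i x) (fun i j => qD u i j x)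
    (fun i j k => fderiv ℝ (qD u j k) x (stdv (n+1) i)) hr
end
end

section
/- Let n ≥ 4 be an integer and let u be a smooth function on an open subset of ℝ^{n+1}. Then pointwise u·L₄(u) = (σ₁(u) + (1/2)|∇u|²)·|∇u|² − (1/2)·div( u·T₁(u)(∇u) + (1/2)·u·|∇u|²·∇u ), where T₁(u)(∇u) denotes the vector field v determined by ⟨v, X⟩ = T₁(u)(∇u, X) for all vectors X. -/
open MeasureTheory Metric

noncomputable section

local notation "⟪" x ", " y "⟫" => @inner ℝ _ _ x y

variable {m : ℕ}

section AuxLemmas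

variable {m : ℕ}

lemma euc_apply_eq_inner (z : Euc m) (i : Fin m) : z i = ⟪z, stdv m i⟫ := by
  simp [stdv, PiLp.inner_apply, EuclideanSpace.single_apply]

lemma grad_inner (u : Euc m → ℝ) (y v : Euc m) : ⟪grad u y, v⟫ = fderiv ℝ u y v := by
  simp only [grad, gradient]
  exact InnerProductSpace.toDual_symm_apply

lemma grad_coord (u : Euc m → ℝ) (y : Euc m) (i : Fin m) :
    grad u y i = fderiv ℝ u y (stdv m i) := by
  rw [euc_apply_eq_inner (grad u y) i, grad_inner]

lemma gradnormsq (u : Euc m → ℝ) (y : Euc m) :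
    ‖grad u y‖ ^ 2 = ∑ j, fderiv ℝ u y (stdv m j) * fderiv ℝ u y (stdv m j) := by
  rw [← real_inner_self_eq_norm_sq]
  rw [show ⟪grad u y, grad u y⟫ = ∑ i, grad u y i * grad u y i by
    rw [PiLp.inner_apply]; exact Finset.sum_congr rfl fun i _ => by simp [sq]]
  exact Finset.sum_congr rfl fun j _ => by rw [grad_coord]

lemma euc_decomp (z : Euc m) : z = ∑ j, z j • stdv m j := by
  ext i
  rw [show ((∑ j, z j • stdv m j : Euc m)) i = ∑ j, (z j • stdv m j : Euc m) i from
    by simp only [WithLp.ofLp_sum, Finset.sum_apply]]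
  simp [stdv, EuclideanSpace.single_apply]

lemma hess_eq (u : Euc m → ℝ) (x v w : Euc m) :
    hess u x v w = fderiv ℝ (fderiv ℝ u) x v w := by
  have h1 : gradient u = ((InnerProductSpace.toDual ℝ (Euc m)).symm ∘ fderiv ℝ u) := rfl
  have h2 : fderiv ℝ (gradient u) x v
      = (InnerProductSpace.toDual ℝ (Euc m)).symm (fderiv ℝ (fderiv ℝ u) x v) := by
    rw [h1, LinearIsometryEquiv.comp_fderiv]; rfl
  rw [hess, hessVec, h2]
  exact InnerProductSpace.toDual_symm_apply

lemma clm2_decomp (L : Euc m →L[ℝ] Euc m →L[ℝ] ℝ) (z : Euc m) (w : Euc m) :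
    L z w = ∑ j, z j * L (stdv m j) w := by
  conv_lhs => rw [euc_decomp z]
  rw [map_sum, ContinuousLinearMap.sum_apply]
  exact Finset.sum_congr rfl fun j _ => by
    rw [ContinuousLinearMap.map_smul, ContinuousLinearMap.smul_apply, smul_eq_mul]

lemma clm2_decomp' (L : Euc m →L[ℝ] Euc m →L[ℝ] ℝ) (z w : Euc m) :
    L z w = ∑ j, ∑ k, z j * (w k * L (stdv m j) (stdv m k)) := by
  rw [clm2_decomp L z w]
  refine Finset.sum_congr rfl fun j _ => ?_
  rw [show L (stdv m j) w = ∑ k, w k * L (stdv m j) (stdv m k) by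
      conv_lhs => rw [euc_decomp w]
      rw [map_sum]
      exact Finset.sum_congr rfl fun k _ => by rw [ContinuousLinearMap.map_smul, smul_eq_mul],
    Finset.mul_sum]

lemma fderiv_apply_const {W : Type*} [NormedAddCommGroup W] [NormedSpace ℝ W]
    {F : Euc m → Euc m →L[ℝ] W} {x : Euc m} (h : DifferentiableAt ℝ F x) (v t : Euc m) :
    fderiv ℝ (fun y => F y v) x t = fderiv ℝ F x t v := by
  rw [fderiv_clm_apply h (differentiableAt_const v)]
  simp

lemma fd_mul {f g : Euc m → ℝ} {x : Euc m} (hf : DifferentiableAt ℝ f x)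
    (hg : DifferentiableAt ℝ g x) (t : Euc m) :
    fderiv ℝ (fun y => f y * g y) x t = fderiv ℝ f x t * g x + f x * fderiv ℝ g x t := by
  rw [fderiv_fun_mul hf hg]
  simp [smul_eq_mul]
  ring

lemma fd_sub {f g : Euc m → ℝ} {x : Euc m} (hf : DifferentiableAt ℝ f x)
    (hg : DifferentiableAt ℝ g x) (t : Euc m) :
    fderiv ℝ (fun y => f y - g y) x t = fderiv ℝ f x t - fderiv ℝ g x t := by
  rw [fderiv_fun_sub hf hg]; rfl

lemma fd_cmul {f : Euc m → ℝ} {x : Euc m} (hf : DifferentiableAt ℝ f x) (c : ℝ) (t : Euc m) :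
    fderiv ℝ (fun y => c * f y) x t = c * fderiv ℝ f x t := by
  rw [fderiv_const_mul hf c]; rfl

lemma fd_sum {κ : Type*} [Fintype κ] {f : κ → Euc m → ℝ} {x : Euc m}
    (hf : ∀ j, DifferentiableAt ℝ (f j) x) (t : Euc m) :
    fderiv ℝ (fun y => ∑ j, f j y) x t = ∑ j, fderiv ℝ (f j) x t := by
  rw [fderiv_fun_sum fun j _ => hf j]
  simp

end AuxLemmas

set_option maxHeartbeats 1000000

/-- `u·L₄(u)` in divergence form. -/
theorem statement5 (n : ℕ) (hn : 4 ≤ n) (U : Set (Euc (n+1))) (hU : IsOpen U)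
    (u : Euc (n+1) → ℝ) (hu : ContDiffOn ℝ (⊤ : ℕ∞) u U) (x : Euc (n+1)) (hx : x ∈ U) :
    u x * L4 n u x
      = (sigma1 n u x + (1/2) * ‖grad u x‖^2) * ‖grad u x‖^2
        - (1/2) * divg (fun y => u y • T1app n u y (grad u y)
            + ((1/2) * u y * ‖grad u y‖^2) • grad u y) x := by
  have hCA : ∀ y ∈ U, ContDiffAt ℝ (⊤ : ℕ∞) u y := fun y hy => (hu y hy).contDiffAt (hU.mem_nhds hy)
  set F1 : Euc (n+1) → Euc (n+1) →L[ℝ] ℝ := fderiv ℝ u with hF1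
  set F2 : Euc (n+1) → Euc (n+1) →L[ℝ] Euc (n+1) →L[ℝ] ℝ := fderiv ℝ F1 with hF2
  set F3 := fderiv ℝ F2 with hF3
  set e : Fin (n+1) → Euc (n+1) := stdv (n+1) with he
  have hCA1 : ∀ y ∈ U, ContDiffAt ℝ 3 F1 y := fun y hy => (hCA y hy).fderiv_right (ENat.natCast_le_of_coe_top_le_withTop le_rfl (3+1))
  have hCA2 : ∀ y ∈ U, ContDiffAt ℝ 2 F2 y := fun y hy =>
    (hCA1 y hy).fderiv_right (by norm_num)
  have hdu : ∀ y ∈ U, DifferentiableAt ℝ u y := fun y hy =>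
    (hCA y hy).differentiableAt (by simp)
  have hd1 : ∀ y ∈ U, DifferentiableAt ℝ F1 y := fun y hy =>
    (hCA1 y hy).differentiableAt (by norm_num)
  have hd2 : ∀ y ∈ U, DifferentiableAt ℝ F2 y := fun y hy =>
    (hCA2 y hy).differentiableAt (by norm_num)
  have hd1c : ∀ v, DifferentiableAt ℝ (fun y => F1 y v) x :=
    fun v => (hd1 x hx).clm_apply (differentiableAt_const v)
  have hd2c : ∀ v w, DifferentiableAt ℝ (fun y => F2 y v w) x := fun v w =>
    ((hd2 x hx).clm_apply (differentiableAt_const v)).clm_apply (differentiableAt_const w)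
  have pd1 : ∀ v t, fderiv ℝ (fun y => F1 y v) x t = F2 x t v :=
    fun v t => fderiv_apply_const (hd1 x hx) v t
  have pd2 : ∀ v w t, fderiv ℝ (fun y => F2 y v w) x t = F3 x t v w := by
    intro v w t
    have h1 : DifferentiableAt ℝ (fun y => F2 y v) x :=
      (hd2 x hx).clm_apply (differentiableAt_const v)
    calc fderiv ℝ (fun y => F2 y v w) x t
        = fderiv ℝ (fun y => F2 y v) x t w := fderiv_apply_const h1 w t
      _ = F3 x t v w := by rw [fderiv_apply_const (hd2 x hx) v t]
  have hsym2 : ∀ y ∈ U, ∀ v w, F2 y v w = F2 y w v := fun y hy v w =>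
    ((hCA y hy).isSymmSndFDerivAt (by rw [minSmoothness_of_isRCLikeNormedField]; exact_mod_cast ENat.natCast_le_of_coe_top_le_withTop le_rfl 2)) v w
  have hsym3a : ∀ t v w, F3 x t v w = F3 x v t w := by
    intro t v w
    have h := ((hCA1 x hx).isSymmSndFDerivAt (by norm_num)) t v
    exact congrArg (fun L => L w) h
  have hsym3b : ∀ t v w, F3 x t v w = F3 x t w v := by
    intro t v w
    have hev : (fun y => F2 y v w) =ᶠ[nhds x] (fun y => F2 y w v) := by
      filter_upwards [hU.mem_nhds hx] with y hy using hsym2 y hy v w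
    calc F3 x t v w = fderiv ℝ (fun y => F2 y v w) x t := (pd2 v w t).symm
      _ = fderiv ℝ (fun y => F2 y w v) x t := by rw [hev.fderiv_eq]
      _ = F3 x t w v := pd2 w v t
  -- pointwise coordinate facts
  have hgc : ∀ (y : Euc (n+1)) (j : Fin (n+1)), grad u y j = F1 y (e j) :=
    fun y j => grad_coord u y j
  have hgn : ∀ y : Euc (n+1), ‖grad u y‖^2 = ∑ j, F1 y (e j) * F1 y (e j) :=
    fun y => gradnormsq u y
  have hhe : ∀ (y v w : Euc (n+1)), hess u y v w = F2 y v w := fun y v w => hess_eq u y v w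
  have hlap : ∀ y : Euc (n+1), lap u y = ∑ j, F2 y (e j) (e j) := by
    intro y
    simp only [lap, ← he]
    exact Finset.sum_congr rfl fun j _ => hhe y (e j) (e j)
  have hhv : ∀ (y : Euc (n+1)) (i : Fin (n+1)),
      hessVec u y (grad u y) i = ∑ j, F1 y (e j) * F2 y (e j) (e i) := by
    intro y i
    rw [euc_apply_eq_inner (hessVec u y (grad u y)) i, ← he]
    show hess u y (grad u y) (e i) = _
    rw [hhe, clm2_decomp]
    exact Finset.sum_congr rfl fun j _ => by rw [← he, ← hgc]
  have hW : ∀ i : Fin (n+1),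
      (fun y => (u y • T1app n u y (grad u y)
          + ((1/2) * u y * ‖grad u y‖^2) • grad u y) i) =ᶠ[nhds x]
      (fun y => (((n:ℝ)-3)/4) * ((u y * u y) * (∑ j, F1 y (e j) * F2 y (e j) (e i)))
        - (((n:ℝ)-3)/4) * ((u y * u y) * ((∑ j, F2 y (e j) (e j)) * F1 y (e i)))
        - (((n:ℝ)-1)/2) * (u y * ((∑ j, F1 y (e j) * F1 y (e j)) * F1 y (e i)))) := by
    intro i
    filter_upwards [hU.mem_nhds hx] with y hy
    have h1 : (u y • T1app n u y (grad u y)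
        + ((1/2) * u y * ‖grad u y‖^2) • grad u y) i
        = u y * ((sigma1 n u y + (1/2) * ‖grad u y‖^2) * grad u y i
            + ((((n:ℝ)-3)/4) * u y) * hessVec u y (grad u y) i
            - ((((n:ℝ)+1)/4) * ⟪grad u y, grad u y⟫) * grad u y i)
          + ((1/2) * u y * ‖grad u y‖^2) * grad u y i := by
      simp only [T1app, PiLp.add_apply, PiLp.sub_apply, PiLp.smul_apply, smul_eq_mul]
      try ring
    rw [h1, hhv, real_inner_self_eq_norm_sq, sigma1, hlap, hgn, hgc]
    ring
  have pd0 : ∀ t, fderiv ℝ u x t = F1 x t := fun t => rfl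
  have hdT : DifferentiableAt ℝ (fun y => ∑ j, F2 y (e j) (e j)) x :=
    DifferentiableAt.fun_sum fun j _ => hd2c (e j) (e j)
  have hdS : DifferentiableAt ℝ (fun y => ∑ j, F1 y (e j) * F1 y (e j)) x :=
    DifferentiableAt.fun_sum fun j _ => (hd1c (e j)).mul (hd1c (e j))
  have hdA : ∀ i, DifferentiableAt ℝ (fun y => ∑ j, F1 y (e j) * F2 y (e j) (e i)) x := fun i =>
    DifferentiableAt.fun_sum fun j _ => (hd1c (e j)).mul (hd2c (e j) (e i))
  have dT : ∀ t, fderiv ℝ (fun y => ∑ j, F2 y (e j) (e j)) x t = ∑ j, F3 x t (e j) (e j) := by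
    intro t
    rw [fd_sum (fun j => hd2c (e j) (e j)) t]
    exact Finset.sum_congr rfl fun j _ => pd2 (e j) (e j) t
  have dS : ∀ t, fderiv ℝ (fun y => ∑ j, F1 y (e j) * F1 y (e j)) x t
      = ∑ j, (F2 x t (e j) * F1 x (e j) + F1 x (e j) * F2 x t (e j)) := by
    intro t
    rw [fd_sum (fun j => (hd1c (e j)).fun_mul (hd1c (e j))) t]
    exact Finset.sum_congr rfl fun j _ => by
      rw [fd_mul (hd1c (e j)) (hd1c (e j)) t, pd1]
  have dA : ∀ i t, fderiv ℝ (fun y => ∑ j, F1 y (e j) * F2 y (e j) (e i)) x t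
      = ∑ j, (F2 x t (e j) * F2 x (e j) (e i) + F1 x (e j) * F3 x t (e j) (e i)) := by
    intro i t
    rw [fd_sum (fun j => (hd1c (e j)).fun_mul (hd2c (e j) (e i))) t]
    exact Finset.sum_congr rfl fun j _ => by
      rw [fd_mul (hd1c (e j)) (hd2c (e j) (e i)) t, pd1, pd2]
  have du' := hdu x hx
  have huu : DifferentiableAt ℝ (fun y => u y * u y) x := du'.mul du'
  have hE : ∀ i : Fin (n+1),
      fderiv ℝ (fun y => (u y • T1app n u y (grad u y)
          + ((1/2) * u y * ‖grad u y‖^2) • grad u y) i) x (e i)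
      = (((n:ℝ)-3)/4) * ((F1 x (e i) * u x + u x * F1 x (e i))
              * (∑ j, F1 x (e j) * F2 x (e j) (e i))
            + (u x * u x) * (∑ j, (F2 x (e i) (e j) * F2 x (e j) (e i)
                + F1 x (e j) * F3 x (e i) (e j) (e i))))
        - (((n:ℝ)-3)/4) * ((F1 x (e i) * u x + u x * F1 x (e i))
              * ((∑ j, F2 x (e j) (e j)) * F1 x (e i))
            + (u x * u x) * ((∑ j, F3 x (e i) (e j) (e j)) * F1 x (e i)
                + (∑ j, F2 x (e j) (e j)) * F2 x (e i) (e i)))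
        - (((n:ℝ)-1)/2) * (F1 x (e i) * ((∑ j, F1 x (e j) * F1 x (e j)) * F1 x (e i))
            + u x * ((∑ j, (F2 x (e i) (e j) * F1 x (e j) + F1 x (e j) * F2 x (e i) (e j)))
                  * F1 x (e i)
                + (∑ j, F1 x (e j) * F1 x (e j)) * F2 x (e i) (e i))) := by
    intro i
    have hgi := hd1c (e i)
    have hTg : DifferentiableAt ℝ (fun y => (∑ j, F2 y (e j) (e j)) * F1 y (e i)) x :=
      hdT.mul hgi
    have hSg : DifferentiableAt ℝ (fun y => (∑ j, F1 y (e j) * F1 y (e j)) * F1 y (e i)) x :=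
      hdS.mul hgi
    rw [(hW i).fderiv_eq,
      fd_sub (((huu.fun_mul (hdA i)).const_mul (((n:ℝ)-3)/4)).fun_sub
        ((huu.fun_mul hTg).const_mul (((n:ℝ)-3)/4))) ((du'.fun_mul hSg).const_mul (((n:ℝ)-1)/2)) (e i),
      fd_sub ((huu.fun_mul (hdA i)).const_mul (((n:ℝ)-3)/4))
        ((huu.fun_mul hTg).const_mul (((n:ℝ)-3)/4)) (e i),
      fd_cmul (huu.fun_mul (hdA i)) (((n:ℝ)-3)/4) (e i),
      fd_cmul (huu.fun_mul hTg) (((n:ℝ)-3)/4) (e i),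
      fd_cmul (du'.fun_mul hSg) (((n:ℝ)-1)/2) (e i),
      fd_mul huu (hdA i) (e i), fd_mul huu hTg (e i), fd_mul du' hSg (e i),
      fd_mul du' du' (e i), fd_mul hdT hgi (e i), fd_mul hdS hgi (e i),
      dA i (e i), dT (e i), dS (e i), pd1 (e i) (e i), pd0 (e i)]
  have hEc : ∀ i : Fin (n+1),
      fderiv ℝ (fun y => (u y • T1app n u y (grad u y)
          + ((1/2) * u y * ‖grad u y‖^2) • grad u y) i) x (e i)
      = (((n:ℝ)-3)/4) * (2 * (u x * (F1 x (e i) * (∑ j, F1 x (e j) * F2 x (e j) (e i)))))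
        + (((n:ℝ)-3)/4) * ((u x * u x) * (∑ j, F2 x (e j) (e i) * F2 x (e j) (e i)))
        + (((n:ℝ)-3)/4) * ((u x * u x) * (∑ j, F1 x (e j) * F3 x (e j) (e i) (e i)))
        - (((n:ℝ)-3)/4) * (2 * (u x * ((∑ j, F2 x (e j) (e j)) * (F1 x (e i) * F1 x (e i)))))
        - (((n:ℝ)-3)/4) * ((u x * u x) * (∑ j, F3 x (e i) (e j) (e j) * F1 x (e i)))
        - (((n:ℝ)-3)/4) * ((u x * u x) * ((∑ j, F2 x (e j) (e j)) * F2 x (e i) (e i)))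
        - (((n:ℝ)-1)/2) * ((∑ j, F1 x (e j) * F1 x (e j)) * (F1 x (e i) * F1 x (e i)))
        - (((n:ℝ)-1)/2) * (2 * (u x * (F1 x (e i) * (∑ j, F1 x (e j) * F2 x (e j) (e i)))))
        - (((n:ℝ)-1)/2) * (u x * ((∑ j, F1 x (e j) * F1 x (e j)) * F2 x (e i) (e i))) := by
    intro i
    rw [hE i]
    have s1 : (∑ j, (F2 x (e i) (e j) * F2 x (e j) (e i)
          + F1 x (e j) * F3 x (e i) (e j) (e i)))
        = (∑ j, F2 x (e j) (e i) * F2 x (e j) (e i))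
          + (∑ j, F1 x (e j) * F3 x (e j) (e i) (e i)) := by
      rw [Finset.sum_add_distrib]
      exact congrArg₂ (· + ·)
        (Finset.sum_congr rfl fun j _ => by rw [hsym2 x hx (e i) (e j)])
        (Finset.sum_congr rfl fun j _ => by rw [hsym3a (e i) (e j) (e i)])
    have s2 : (∑ j, (F2 x (e i) (e j) * F1 x (e j) + F1 x (e j) * F2 x (e i) (e j)))
        = 2 * ∑ j, F1 x (e j) * F2 x (e j) (e i) := by
      rw [Finset.mul_sum]
      exact Finset.sum_congr rfl fun j _ => by rw [hsym2 x hx (e i) (e j)]; ring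
    have s4 : (∑ j, F3 x (e i) (e j) (e j)) * F1 x (e i)
        = ∑ j, F3 x (e i) (e j) (e j) * F1 x (e i) := Finset.sum_mul _ _ _
    rw [s1, s2, s4]
    ring
  have hdivg : divg (fun y => u y • T1app n u y (grad u y)
      + ((1/2) * u y * ‖grad u y‖^2) • grad u y) x
      = ∑ i, ((((n:ℝ)-3)/4) * (2 * (u x * (F1 x (e i) * (∑ j, F1 x (e j) * F2 x (e j) (e i)))))
        + (((n:ℝ)-3)/4) * ((u x * u x) * (∑ j, F2 x (e j) (e i) * F2 x (e j) (e i)))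
        + (((n:ℝ)-3)/4) * ((u x * u x) * (∑ j, F1 x (e j) * F3 x (e j) (e i) (e i)))
        - (((n:ℝ)-3)/4) * (2 * (u x * ((∑ j, F2 x (e j) (e j)) * (F1 x (e i) * F1 x (e i)))))
        - (((n:ℝ)-3)/4) * ((u x * u x) * (∑ j, F3 x (e i) (e j) (e j) * F1 x (e i)))
        - (((n:ℝ)-3)/4) * ((u x * u x) * ((∑ j, F2 x (e j) (e j)) * F2 x (e i) (e i)))
        - (((n:ℝ)-1)/2) * ((∑ j, F1 x (e j) * F1 x (e j)) * (F1 x (e i) * F1 x (e i)))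
        - (((n:ℝ)-1)/2) * (2 * (u x * (F1 x (e i) * (∑ j, F1 x (e j) * F2 x (e j) (e i)))))
        - (((n:ℝ)-1)/2) * (u x * ((∑ j, F1 x (e j) * F1 x (e j)) * F2 x (e i) (e i)))) := by
    simp only [divg, ← he]
    exact Finset.sum_congr rfl fun i _ => hEc i
  have hHN : hessNormSq u x = ∑ i, ∑ j, F2 x (e j) (e i) * F2 x (e j) (e i) := by
    simp only [hessNormSq, ← he, hhe, pow_two]
    exact Finset.sum_comm
  have hHGG : hess u x (grad u x) (grad u x)
      = ∑ i, F1 x (e i) * (∑ j, F1 x (e j) * F2 x (e j) (e i)) := by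
    rw [hhe, clm2_decomp']
    rw [Finset.sum_comm]
    refine Finset.sum_congr rfl fun i _ => ?_
    rw [Finset.mul_sum]
    refine Finset.sum_congr rfl fun j _ => ?_
    simp only [← he, hgc]
    ring
  rw [hdivg]
  simp only [L4, sigma1]
  rw [hlap, hHN, hHGG, hgn]
  simp only [Finset.sum_add_distrib, Finset.sum_sub_distrib, ← Finset.mul_sum]
  have hDS34 : (∑ i, ∑ j, F1 x (e j) * F3 x (e j) (e i) (e i))
      = ∑ i, ∑ j, F3 x (e i) (e j) (e j) * F1 x (e i) := by
    rw [Finset.sum_comm]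
    refine Finset.sum_congr rfl fun i _ => ?_
    exact Finset.sum_congr rfl fun j _ => mul_comm _ _
  rw [hDS34]
  ring
end
end

section
/- Let n ≥ 4 be an integer and let u be a smooth function on an open subset of ℝ^{n+1}. Then for every constant vector X, the divergence identity div( u·T₁(u)(·,X) ) = −((n+5)/(n−3))·T₁(u)(∇u, X) + (4n/(n−3))·σ₁(u)·⟨∇u, X⟩ holds pointwise; i.e., the (row-wise) divergence of the symmetric 2-tensor field u·T₁(u) equals the vector field −((n+5)/(n−3))·T₁(u)(∇u) + (4n/(n−3))·σ₁(u)·∇u. -/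
open MeasureTheory Metric

noncomputable section

local notation "⟪" x ", " y "⟫" => @inner ℝ _ _ x y

variable {m : ℕ}

namespace Aux
open InnerProductSpace

variable {m : ℕ}

lemma sum_comp (w : Fin m → Euc m) (i : Fin m) :
    (∑ j, w j) i = ∑ j, w j i := by
  rw [WithLp.ofLp_sum]; exact Finset.sum_apply i Finset.univ _

lemma decomp (w : Euc m) : ∑ i, w i • stdv m i = w := by
  ext j; rw [sum_comp]; simp [stdv, EuclideanSpace.single_apply]

lemma rinner (v w : Euc m) : ⟪v, w⟫ = ∑ i, v i * w i := by
  simp [PiLp.inner_apply, RCLike.inner_apply, mul_comm]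

lemma inner_stdv (v : Euc m) (i : Fin m) : ⟪v, stdv m i⟫ = v i := by
  simp [stdv, EuclideanSpace.inner_single_right]

lemma map_decomp (T : Euc m →L[ℝ] Euc m) (X : Euc m) :
    T X = ∑ i, X i • T (stdv m i) := by
  conv_lhs => rw [← decomp X]
  rw [map_sum]; simp

lemma clm_comp_decomp (T : Euc m →L[ℝ] Euc m) (w : Euc m) (i : Fin m) :
    T w i = ∑ j, w j * T (stdv m j) i := by
  conv_lhs => rw [map_decomp T w]
  rw [sum_comp]; simp [PiLp.smul_apply]

lemma S3 (T : Euc m →L[ℝ] Euc m) (G X : Euc m) :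
    ∑ i, ⟪T (stdv m i), G⟫ * X i = ⟪T X, G⟫ := by
  rw [map_decomp T X, sum_inner]
  simp only [real_inner_smul_left]
  exact Finset.sum_congr rfl fun i _ => (mul_comm _ _)

lemma S4 (T : Euc m →L[ℝ] Euc m) (hT : ∀ v w : Euc m, ⟪T v, w⟫ = ⟪T w, v⟫)
    (G X : Euc m) : ∑ i, ⟪T (stdv m i), X⟫ * G i = ⟪T X, G⟫ := by
  rw [rinner (T X) G]
  refine Finset.sum_congr rfl fun i _ => ?_
  rw [hT (stdv m i) X, inner_stdv]

lemma S5 (T : Euc m →L[ℝ] Euc m) (G X : Euc m) :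
    ∑ i, G i * T X i = ⟪T X, G⟫ := by
  rw [rinner (T X) G]
  exact Finset.sum_congr rfl fun i _ => (mul_comm _ _)

lemma S7 (T2 : Euc m →L[ℝ] Euc m →L[ℝ] Euc m)
    (hsym : ∀ v w : Euc m, T2 v w = T2 w v) (X : Euc m) :
    ∑ i, (∑ j, T2 (stdv m i) (stdv m j) j) * X i = ∑ i, T2 (stdv m i) X i := by
  have h1 : ∀ i : Fin m, T2 (stdv m i) X i = ∑ j, X j * T2 (stdv m j) (stdv m i) i := by
    intro i
    rw [clm_comp_decomp (T2 (stdv m i)) X i]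
    exact Finset.sum_congr rfl fun j _ => by rw [hsym (stdv m i) (stdv m j)]
  rw [Finset.sum_congr rfl fun i (_ : i ∈ Finset.univ) => h1 i, Finset.sum_comm]
  refine Finset.sum_congr rfl fun i _ => ?_
  rw [Finset.sum_mul]
  exact Finset.sum_congr rfl fun j _ => mul_comm _ _

lemma lap_eq (u : Euc m → ℝ) (x : Euc m) :
    lap u x = ∑ i, fderiv ℝ (gradient u) x (stdv m i) i := by
  simp only [lap, hess, hessVec]
  exact Finset.sum_congr rfl fun i _ => inner_stdv _ i

lemma grad_contDiffAt {u : Euc m → ℝ} {x : Euc m} (h : ContDiffAt ℝ (⊤ : ℕ∞) u x) :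
    ContDiffAt ℝ (⊤ : ℕ∞) (gradient u) x := by
  have h1 : ContDiffAt ℝ (⊤ : ℕ∞) (fderiv ℝ u) x := h.fderiv_right (by simp)
  have h2 : ContDiff ℝ (⊤ : ℕ∞) ((InnerProductSpace.toDual ℝ (Euc m)).symm) :=
    (InnerProductSpace.toDual ℝ (Euc m)).symm.toContinuousLinearEquiv.contDiff
  exact h2.contDiffAt.comp x h1

lemma hasF_u {u : Euc m → ℝ} {x : Euc m} (h : ContDiffAt ℝ (⊤ : ℕ∞) u x) :
    HasFDerivAt u (InnerProductSpace.toDual ℝ (Euc m) (gradient u x)) x :=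
  hasGradientAt_iff_hasFDerivAt.mp (h.differentiableAt (by simp)).hasGradientAt

lemma hasF_grad {u : Euc m → ℝ} {x : Euc m} (h : ContDiffAt ℝ (⊤ : ℕ∞) u x) :
    HasFDerivAt (gradient u) (fderiv ℝ (gradient u) x) x :=
  ((grad_contDiffAt h).differentiableAt (by simp)).hasFDerivAt

lemma hasF_fderiv_grad {u : Euc m → ℝ} {x : Euc m} (h : ContDiffAt ℝ (⊤ : ℕ∞) u x) :
    HasFDerivAt (fderiv ℝ (gradient u)) (fderiv ℝ (fderiv ℝ (gradient u)) x) x :=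
  (((grad_contDiffAt h).fderiv_right (m := (⊤ : ℕ∞)) (by simp)).differentiableAt (by simp)).hasFDerivAt

lemma key_snd {u : Euc m → ℝ} {x : Euc m} (h : ContDiffAt ℝ (⊤ : ℕ∞) u x) :
    ∀ w v : Euc m, ⟪fderiv ℝ (gradient u) x v, w⟫ = fderiv ℝ (fderiv ℝ u) x v w := by
  intro w v
  have hg : HasFDerivAt (gradient u) (fderiv ℝ (gradient u) x) x := hasF_grad h
  have hK : HasFDerivAt (fderiv ℝ u) (fderiv ℝ (fderiv ℝ u) x) x :=
    ((h.fderiv_right (m := (⊤ : ℕ∞)) (by simp)).differentiableAt (by simp)).hasFDerivAt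
  have e1 : HasFDerivAt (fun y => fderiv ℝ u y w)
      ((ContinuousLinearMap.apply ℝ ℝ w).comp (fderiv ℝ (fderiv ℝ u) x)) x :=
    (ContinuousLinearMap.apply ℝ ℝ w).hasFDerivAt.comp x hK
  have e2 := hg.inner ℝ (hasFDerivAt_const w x)
  have e3 : HasFDerivAt (fun y => ⟪gradient u y, w⟫)
      ((ContinuousLinearMap.apply ℝ ℝ w).comp (fderiv ℝ (fderiv ℝ u) x)) x :=
    e1.congr_of_eventuallyEq (Filter.Eventually.of_forall fun y =>
      InnerProductSpace.toDual_symm_apply)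
  have h5 := congrArg (fun (T : Euc m →L[ℝ] ℝ) => T v) (e3.unique e2)
  simp only [ContinuousLinearMap.comp_apply, ContinuousLinearMap.apply_apply,
    ContinuousLinearMap.prod_apply, fderivInnerCLM_apply, ContinuousLinearMap.zero_apply,
    inner_zero_right, add_zero, zero_add] at h5
  exact h5.symm

lemma hess_symm {u : Euc m → ℝ} {x : Euc m} (h : ContDiffAt ℝ (⊤ : ℕ∞) u x) (v w : Euc m) :
    ⟪fderiv ℝ (gradient u) x v, w⟫ = ⟪fderiv ℝ (gradient u) x w, v⟫ := by
  rw [key_snd h w v, key_snd h v w]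
  exact (h.isSymmSndFDerivAt (by rw [minSmoothness_of_isRCLikeNormedField]; exact WithTop.coe_le_coe.mpr le_top)) v w

lemma hasF_gi {u : Euc m → ℝ} {x : Euc m} (h : ContDiffAt ℝ (⊤ : ℕ∞) u x) (i : Fin m) :
    HasFDerivAt (fun y => gradient u y i)
      ((EuclideanSpace.proj i).comp (fderiv ℝ (gradient u) x)) x := by
  exact
    (EuclideanSpace.proj (𝕜 := ℝ) i).hasFDerivAt.comp x (hasF_grad h)

lemma hasF_hv {u : Euc m → ℝ} {x : Euc m} (h : ContDiffAt ℝ (⊤ : ℕ∞) u x) (X : Euc m) (i : Fin m) :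
    HasFDerivAt (fun y => fderiv ℝ (gradient u) y X i)
      ((EuclideanSpace.proj i).comp ((ContinuousLinearMap.apply ℝ (Euc m) X).comp
        (fderiv ℝ (fderiv ℝ (gradient u)) x))) x := by
  exact
    (EuclideanSpace.proj (𝕜 := ℝ) i).hasFDerivAt.comp x
      ((ContinuousLinearMap.apply ℝ (Euc m) X).hasFDerivAt.comp x (hasF_fderiv_grad h))

lemma hasF_lap {u : Euc m → ℝ} {x : Euc m} (h : ContDiffAt ℝ (⊤ : ℕ∞) u x) :
    HasFDerivAt (lap u)
      (∑ j, (EuclideanSpace.proj j).comp ((ContinuousLinearMap.apply ℝ (Euc m) (stdv m j)).comp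
        (fderiv ℝ (fderiv ℝ (gradient u)) x))) x := by
  have hsum := HasFDerivAt.fun_sum (fun j (_ : j ∈ Finset.univ) => hasF_hv h (stdv m j) j)
  exact hsum.congr_of_eventuallyEq (Filter.Eventually.of_forall fun y => lap_eq u y)

lemma hasF_sq {u : Euc m → ℝ} {x : Euc m} (h : ContDiffAt ℝ (⊤ : ℕ∞) u x) :
    HasFDerivAt (fun y => ‖gradient u y‖^2)
      ((fderivInnerCLM ℝ (gradient u x, gradient u x)).comp
        ((fderiv ℝ (gradient u) x).prod (fderiv ℝ (gradient u) x))) x := by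
  simpa only [real_inner_self_eq_norm_sq] using (hasF_grad h).inner ℝ (hasF_grad h)

lemma hasF_px {u : Euc m → ℝ} {x : Euc m} (h : ContDiffAt ℝ (⊤ : ℕ∞) u x) (X : Euc m) :
    HasFDerivAt (fun y => ⟪gradient u y, X⟫)
      ((fderivInnerCLM ℝ (gradient u x, X)).comp ((fderiv ℝ (gradient u) x).prod 0)) x :=
  (hasF_grad h).inner ℝ (hasFDerivAt_const X x)

end Aux

/-- the divergence identity for `u·T₁(u)`. -/
theorem statement6 (n : ℕ) (hn : 4 ≤ n) (U : Set (Euc (n+1))) (hU : IsOpen U)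
    (u : Euc (n+1) → ℝ) (hu : ContDiffOn ℝ (⊤ : ℕ∞) u U) (x : Euc (n+1)) (hx : x ∈ U)
    (X : Euc (n+1)) :
    divg (fun y => u y • T1app n u y X) x
      = -(((n:ℝ)+5)/((n:ℝ)-3)) * T1b n u x (grad u x) X
        + (4*(n:ℝ)/((n:ℝ)-3)) * sigma1 n u x * ⟪grad u x, X⟫ := by
  classical
  have hc : ContDiffAt ℝ (⊤ : ℕ∞) u x := hu.contDiffAt (hU.mem_nhds hx)
  have hU' := Aux.hasF_u hc
  have hLap' := Aux.hasF_lap hc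
  have hSq' := Aux.hasF_sq hc
  have hPX' := Aux.hasF_px hc X
  have hHv' := fun i => Aux.hasF_hv hc X i
  have hGi' := fun i => Aux.hasF_gi hc i
  have hsymH := Aux.hess_symm hc
  have hsymH2 : ∀ v w : Euc (n+1), fderiv ℝ (fderiv ℝ (gradient u)) x v w
      = fderiv ℝ (fderiv ℝ (gradient u)) x w v :=
    (Aux.grad_contDiffAt hc).isSymmSndFDerivAt (by rw [minSmoothness_of_isRCLikeNormedField]; exact WithTop.coe_le_coe.mpr le_top)
  have hpt : ∀ (i : Fin (n+1)) (y : Euc (n+1)), u y * T1app n u y X i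
      = u y * ((-(((n:ℝ)-3)/4) * u y * lap u y - ((n:ℝ)+1)/4 * ‖gradient u y‖^2
            + 1/2 * ‖gradient u y‖^2) * X i
          + (((n:ℝ)-3)/4 * u y) * fderiv ℝ (gradient u) y X i
          - (((n:ℝ)+1)/4 * ⟪gradient u y, X⟫) * gradient u y i) := by
    intro i y
    simp only [T1app, sigma1, grad, hessVec, PiLp.add_apply, PiLp.sub_apply, PiLp.smul_apply,
      smul_eq_mul]
  have dF : ∀ i : Fin (n+1), fderiv ℝ (fun y => u y * T1app n u y X i) x (stdv (n+1) i)
      = (-(2*(((n:ℝ)-3)/4))*(u x)*(lap u x) - (((n:ℝ)+1)/4)*‖gradient u x‖^2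
            + (1/2)*‖gradient u x‖^2) * (gradient u x i * X i)
        + (2*(((n:ℝ)-3)/4)*(u x)) * (gradient u x i * fderiv ℝ (gradient u) x X i)
        + (-((((n:ℝ)+1)/4))*⟪gradient u x, X⟫) * (gradient u x i * gradient u x i)
        + (-((((n:ℝ)-3)/4))*(u x)*(u x)) *
            ((∑ j, fderiv ℝ (fderiv ℝ (gradient u)) x (stdv (n+1) i) (stdv (n+1) j) j) * X i)
        + ((1-2*(((n:ℝ)+1)/4))*(u x)) *
            (⟪fderiv ℝ (gradient u) x (stdv (n+1) i), gradient u x⟫ * X i)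
        + ((((n:ℝ)-3)/4)*(u x)*(u x)) *
            (fderiv ℝ (fderiv ℝ (gradient u)) x (stdv (n+1) i) X i)
        + (-((((n:ℝ)+1)/4))*(u x)) *
            (⟪fderiv ℝ (gradient u) x (stdv (n+1) i), X⟫ * gradient u x i)
        + (-((((n:ℝ)+1)/4))*(u x)*⟪gradient u x, X⟫) *
            (fderiv ℝ (gradient u) x (stdv (n+1) i) i) := by
    intro i
    have hbig : HasFDerivAt (fun y =>
        u y * ((-(((n:ℝ)-3)/4) * u y * lap u y - ((n:ℝ)+1)/4 * ‖gradient u y‖^2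
            + 1/2 * ‖gradient u y‖^2) * X i
          + (((n:ℝ)-3)/4 * u y) * fderiv ℝ (gradient u) y X i
          - (((n:ℝ)+1)/4 * ⟪gradient u y, X⟫) * gradient u y i)) _ x :=
      hU'.mul (((((((hU'.const_mul (-(((n:ℝ)-3)/4))).mul hLap').sub
            (hSq'.const_mul (((n:ℝ)+1)/4))).add (hSq'.const_mul (1/2))).mul_const (X i)).add
          ((hU'.const_mul (((n:ℝ)-3)/4)).mul (hHv' i))).sub
          ((hPX'.const_mul (((n:ℝ)+1)/4)).mul (hGi' i)))
    have hF : HasFDerivAt (fun y => u y * T1app n u y X i) _ x :=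
      hbig.congr_of_eventuallyEq (Filter.Eventually.of_forall fun y => hpt i y)
    rw [hF.fderiv]
    simp only [ContinuousLinearMap.add_apply, ContinuousLinearMap.sub_apply,
      ContinuousLinearMap.smul_apply, ContinuousLinearMap.comp_apply,
      ContinuousLinearMap.sum_apply, ContinuousLinearMap.prod_apply,
      ContinuousLinearMap.zero_apply, ContinuousLinearMap.apply_apply,
      ContinuousLinearMap.coe_smul', Pi.smul_apply, smul_eq_mul, PiLp.proj_apply,
      EuclideanSpace.proj, fderivInnerCLM_apply, InnerProductSpace.toDual_apply_apply,
      inner_zero_right, add_zero, zero_add, Aux.inner_stdv]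
    rw [real_inner_comm (gradient u x) (fderiv ℝ (gradient u) x (stdv (n+1) i))]
    ring
  have hfun0 : ∀ i : Fin (n+1),
      (fun y => (u y • T1app n u y X) i) = (fun y => u y * T1app n u y X i) := by
    intro i; funext y; simp [PiLp.smul_apply]
  have hL : divg (fun y => u y • T1app n u y X) x
      = ∑ i, fderiv ℝ (fun y => u y * T1app n u y X i) x (stdv (n+1) i) := by
    simp only [divg]
    exact Finset.sum_congr rfl fun i _ => by rw [hfun0 i]
  rw [hL, Finset.sum_congr rfl fun i (_ : i ∈ Finset.univ) => dF i]
  simp only [Finset.sum_add_distrib, ← Finset.mul_sum]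
  rw [Aux.S7 (fderiv ℝ (fderiv ℝ (gradient u)) x) hsymH2 X,
      show ∑ i, gradient u x i * X i = ⟪gradient u x, X⟫ from (Aux.rinner _ X).symm,
      Aux.S5 (fderiv ℝ (gradient u) x) (gradient u x) X,
      show ∑ i, gradient u x i * gradient u x i = ‖gradient u x‖^2 from
        (Aux.rinner _ _).symm.trans (real_inner_self_eq_norm_sq _),
      Aux.S3 (fderiv ℝ (gradient u) x) (gradient u x) X,
      Aux.S4 (fderiv ℝ (gradient u) x) hsymH (gradient u x) X,
      ← Aux.lap_eq u x]
  simp only [T1b, sigma1, hess, hessVec, grad]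
  rw [hsymH (gradient u x) X, real_inner_self_eq_norm_sq]
  have hne : ((n:ℝ) - 3) ≠ 0 := by
    have h4 : (4:ℝ) ≤ (n:ℝ) := by exact_mod_cast hn
    linarith
  field_simp
  ring
end
end

section
/- Let n ≥ 4 be an integer and let u be a smooth function on an open subset of ℝ^{n+1}. Then pointwise ((n−3)/4)·div( u·|∇u|²·∇u ) = 2·T₁(u)(∇u,∇u) − 3·|∇u|²·σ₁(u) + ((n−3)/2)·|∇u|⁴. -/
open MeasureTheory Metric

noncomputable section

local notation "⟪" x ", " y "⟫" => @inner ℝ _ _ x y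

variable {m : ℕ}

section statement7aux

open InnerProductSpace

variable {n : ℕ}

private lemma euc_repr (v : Euc (n+1)) : v = ∑ i, v i • stdv (n+1) i := by
  ext j
  rw [WithLp.ofLp_sum, Finset.sum_apply]
  simp [stdv, EuclideanSpace.single_apply, PiLp.smul_apply]

end statement7aux

/-- divergence identity for `u·|∇u|²·∇u`. -/
theorem statement7 (n : ℕ) (hn : 4 ≤ n) (U : Set (Euc (n+1))) (hU : IsOpen U)
    (u : Euc (n+1) → ℝ) (hu : ContDiffOn ℝ (⊤ : ℕ∞) u U) (x : Euc (n+1)) (hx : x ∈ U) :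
    (((n:ℝ)-3)/4) * divg (fun y => (u y * ‖grad u y‖^2) • grad u y) x
      = 2 * T1b n u x (grad u x) (grad u x) - 3 * ‖grad u x‖^2 * sigma1 n u x
        + (((n:ℝ)-3)/2) * ‖grad u x‖^4 := by
  classical
  have hmem : U ∈ nhds x := hU.mem_nhds hx
  have hux : ContDiffAt ℝ (⊤ : ℕ∞) u x := hu.contDiffAt hmem
  have hud : DifferentiableAt ℝ u x := hux.differentiableAt (by simp)
  have hd1 : ContDiffAt ℝ (⊤ : ℕ∞) (fderiv ℝ u) x := hux.fderiv_right (by simp)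
  set iso := (InnerProductSpace.toDual ℝ (Euc (n+1))).symm with hiso
  have hgrad_eq : gradient u = iso ∘ (fderiv ℝ u) := rfl
  have hgd : DifferentiableAt ℝ (gradient u) x := by
    rw [hgrad_eq]
    exact (iso.toContinuousLinearEquiv.differentiableAt).comp x
      (hd1.differentiableAt (by simp))
  have hgx : HasFDerivAt (gradient u) (fderiv ℝ (gradient u) x) x := hgd.hasFDerivAt
  set H := fderiv ℝ (gradient u) x with hH
  set g := gradient u x with hg
  have hfd : ∀ w, fderiv ℝ u x w = ⟪g, w⟫ := fun w =>
    (InnerProductSpace.toDual_symm_apply).symm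
  have hinner : HasFDerivAt (fun y => ⟪gradient u y, gradient u y⟫)
      ((fderivInnerCLM ℝ (g, g)).comp (H.prod H)) x := hgx.inner (𝕜 := ℝ) hgx
  have hproj : ∀ i : Fin (n+1), HasFDerivAt (fun y => gradient u y i)
      ((EuclideanSpace.proj i).comp H) x := fun i => by
    exact (EuclideanSpace.proj (𝕜 := ℝ) i).hasFDerivAt.comp x hgx
  have hVi : ∀ i : Fin (n+1),
      HasFDerivAt (fun y => (u y * ⟪gradient u y, gradient u y⟫) * (gradient u y i))
        ((u x * ⟪g, g⟫) • ((EuclideanSpace.proj i).comp H)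
          + (g i) • ((u x) • ((fderivInnerCLM ℝ (g, g)).comp (H.prod H))
              + ⟪g, g⟫ • fderiv ℝ u x)) x := fun i =>
    (hud.hasFDerivAt.mul hinner).mul (hproj i)
  have hdiv : divg (fun y => (u y * ‖grad u y‖^2) • grad u y) x
      = ∑ i, ((u x * ⟪g, g⟫) * (H (stdv (n+1) i) i)
          + g i * (u x * (⟪g, H (stdv (n+1) i)⟫ + ⟪H (stdv (n+1) i), g⟫)
              + ⟪g, g⟫ * fderiv ℝ u x (stdv (n+1) i))) := by
    unfold divg
    refine Finset.sum_congr rfl fun i _ => ?_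
    have hfun : (fun y => ((u y * ‖grad u y‖^2) • grad u y) i)
        = fun y => (u y * ⟪gradient u y, gradient u y⟫) * (gradient u y i) := by
      funext y
      simp only [grad, PiLp.smul_apply, smul_eq_mul, ← real_inner_self_eq_norm_sq]
    rw [hfun, (hVi i).fderiv]
    simp [ContinuousLinearMap.add_apply, ContinuousLinearMap.smul_apply,
      ContinuousLinearMap.comp_apply, fderivInnerCLM_apply, ContinuousLinearMap.prod_apply,
      smul_eq_mul]
    ring
  have hsingle : ∀ (v : Euc (n+1)) (i : Fin (n+1)), ⟪v, stdv (n+1) i⟫ = v i := by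
    intro v i
    simpa [stdv] using EuclideanSpace.inner_single_right (𝕜 := ℝ) i 1 v
  have S1 : ∑ i, g i * g i = ⟪g, g⟫ := by
    rw [PiLp.inner_apply]
    simp [RCLike.inner_apply, mul_comm, pow_two]
  have S2 : ∑ i, g i * ⟪H (stdv (n+1) i), g⟫ = hess u x g g := by
    have h0 : hess u x g g = ⟪H g, g⟫ := rfl
    have hHg : H g = ∑ i, g i • H (stdv (n+1) i) := by
      conv_lhs => rw [euc_repr g]
      rw [_root_.map_sum]
      exact Finset.sum_congr rfl fun i _ => H.map_smul _ _
    rw [h0, hHg, sum_inner]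
    exact Finset.sum_congr rfl fun i _ => by rw [real_inner_smul_left]
  have S3 : ∑ i, H (stdv (n+1) i) i = lap u x := by
    unfold lap
    refine Finset.sum_congr rfl fun i _ => ?_
    have : hess u x (stdv (n+1) i) (stdv (n+1) i) = ⟪H (stdv (n+1) i), stdv (n+1) i⟫ := rfl
    rw [this, hsingle]
  have key : divg (fun y => (u y * ‖grad u y‖^2) • grad u y) x
      = (u x * ⟪g, g⟫) * lap u x + 2 * u x * hess u x g g + ⟪g, g⟫ * ⟪g, g⟫ := by
    rw [hdiv]
    have : ∀ i : Fin (n+1),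
        (u x * ⟪g, g⟫) * (H (stdv (n+1) i) i)
          + g i * (u x * (⟪g, H (stdv (n+1) i)⟫ + ⟪H (stdv (n+1) i), g⟫)
              + ⟪g, g⟫ * fderiv ℝ u x (stdv (n+1) i))
        = (u x * ⟪g, g⟫) * (H (stdv (n+1) i) i)
          + (2 * u x) * (g i * ⟪H (stdv (n+1) i), g⟫)
          + ⟪g, g⟫ * (g i * g i) := by
      intro i
      rw [hfd, hsingle, real_inner_comm g (H (stdv (n+1) i))]
      ring
    rw [Finset.sum_congr rfl fun i _ => this i]
    rw [Finset.sum_add_distrib, Finset.sum_add_distrib, ← Finset.mul_sum,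
      ← Finset.mul_sum, ← Finset.mul_sum, S1, S2, S3]
  have hgg : (inner ℝ g g : ℝ) = ‖grad u x‖ ^ 2 := real_inner_self_eq_norm_sq (grad u x)
  have hee : hess u x (grad u x) (grad u x) = hess u x g g := rfl
  have hgg2 : (inner ℝ (grad u x) (grad u x) : ℝ) = ‖grad u x‖ ^ 2 :=
    real_inner_self_eq_norm_sq (grad u x)
  rw [key]
  simp only [T1b, sigma1, hee, hgg, hgg2]
  ring
end
end

section
/- Let n ≥ 4 be an integer, let u be a smooth function on a neighborhood of the closed unit ball B ⊂ ℝ^{n+1}, and let x denote a Cartesian coordinate function x_i. Then at every point of the unit sphere S^n, the commutator [B₃, x](u,u,u) := (1/3)·(d/dt)|_{t=0} B₃(u + t·x·u) − x·B₃(u) satisfies [B₃, x](u,u,u) = (x·u/3)·( T₁(u)(η,η) + (n(n−3)/4)·u·H(u) ) − ((n−2)/3)·u·H(u)·⟨∇̄u, ∇̄x⟩. -/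
open MeasureTheory Metric

noncomputable section

local notation "⟪" x ", " y "⟫" => @inner ℝ _ _ x y

variable {m : ℕ}

/- ### auxiliary lemmas for statement 15 -/

lemma inner_stdv_left (x : Euc m) (i : Fin m) : ⟪stdv m i, x⟫ = x i := by
  simp [stdv, EuclideanSpace.inner_single_left]

lemma inner_stdv_right (x : Euc m) (i : Fin m) : ⟪x, stdv m i⟫ = x i := by
  simp [stdv, EuclideanSpace.inner_single_right]

lemma hasFDerivAt_coord (i : Fin m) (x : Euc m) :
    HasFDerivAt (fun y : Euc m => y i) (InnerProductSpace.toDual ℝ (Euc m) (stdv m i)) x := by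
  have h : ⇑(InnerProductSpace.toDual ℝ (Euc m) (stdv m i)) = fun y : Euc m => y i := by
    funext y
    rw [InnerProductSpace.toDual_apply_apply, inner_stdv_left]
  have h2 := (InnerProductSpace.toDual ℝ (Euc m) (stdv m i)).hasFDerivAt (x := x)
  rwa [h] at h2

lemma hasDerivAt_affine15 (x0 x1 : ℝ) : HasDerivAt (fun s : ℝ => x0 + s * x1) x1 0 := by
  simpa using ((hasDerivAt_id (0:ℝ)).mul_const x1).const_add x0

lemma hasDerivAt_quad15 (x0 x1 x2 : ℝ) :
    HasDerivAt (fun s : ℝ => x0 + s * x1 + s^2 * x2) x1 0 := by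
  have h := (hasDerivAt_affine15 x0 x1).add ((hasDerivAt_pow 2 (0:ℝ)).mul_const x2)
  exact h.congr_deriv (by simp)

lemma sum_delta_mul (m : ℕ) (i : Fin m) (g : Euc m) : (∑ j, stdv m j i * g j) = g i := by
  simp [stdv, EuclideanSpace.single_apply, ite_mul, Finset.sum_ite_eq']

lemma sum_mul_delta (m : ℕ) (i : Fin m) (g : Euc m) : (∑ j, g j * stdv m i j) = g i := by
  simp [stdv, EuclideanSpace.single_apply, mul_ite, Finset.sum_ite_eq]

/-- the commutator `[B₃, xⁱ](u,u,u)` on the boundary sphere. -/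
theorem statement15 (n : ℕ) (hn : 4 ≤ n) (u : Euc (n+1) → ℝ) (hu : SmoothNearBall u)
    (i : Fin (n+1)) (p : Euc (n+1)) (hp : p ∈ sphere (0 : Euc (n+1)) 1) :
    (1/3) * deriv (fun s : ℝ => B3 n (fun y => u y + s * (y i * u y)) p) 0
        - p i * B3 n u p
      = (p i * u p / 3) * (T1b n u p p p + ((n:ℝ)*((n:ℝ)-3)/4) * u p * Hb n u p)
        - (((n:ℝ)-2)/3) * u p * Hb n u p
          * ⟪tgrad u p, stdv (n+1) i - p i • p⟫ := by
  obtain ⟨U, hUo, hBU, hC⟩ := hu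
  have hpU : p ∈ U := hBU (Metric.sphere_subset_closedBall hp)
  have hmem : U ∈ nhds p := hUo.mem_nhds hpU
  have hpp : ⟪p, p⟫ = (1:ℝ) := by
    rw [real_inner_self_eq_norm_sq, mem_sphere_zero_iff_norm.mp hp]; norm_num
  have hud : ∀ y ∈ U, DifferentiableAt ℝ u y := fun y hy =>
    (hC.contDiffAt (hUo.mem_nhds hy)).differentiableAt (by simp)
  have hdu : ∀ y ∈ U, HasFDerivAt u (InnerProductSpace.toDual ℝ (Euc (n+1)) (gradient u y)) y :=
    fun y hy => hasGradientAt_iff_hasFDerivAt.mp (hud y hy).hasGradientAt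
  have hgc : ContDiffOn ℝ 1 (gradient u) U := by
    have h1 : ContDiffOn ℝ 1 (fderiv ℝ u) U := hC.fderiv_of_isOpen hUo (by exact WithTop.coe_le_coe.mpr (le_top : (1+1 : ℕ∞) ≤ ⊤))
    exact (LinearIsometryEquiv.contDiff
      (InnerProductSpace.toDual ℝ (Euc (n+1))).symm).comp_contDiffOn h1
  have hgdp : DifferentiableAt ℝ (gradient u) p := (hgc.contDiffAt hmem).differentiableAt one_ne_zero
  have hDgFD : HasFDerivAt (gradient u) (fderiv ℝ (gradient u) p) p := hgdp.hasFDerivAt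
  have hgs : ∀ (s : ℝ), ∀ y ∈ U, HasGradientAt (fun y => u y + s * (y i * u y))
      (gradient u y + s • (y i • gradient u y + u y • stdv (n+1) i)) y := by
    intro s y hy
    rw [hasGradientAt_iff_hasFDerivAt]
    have h4 := (hdu y hy).add (((hasFDerivAt_coord i y).mul (hdu y hy)).const_mul s)
    refine h4.congr_fderiv ?_
    ext z
    simp only [InnerProductSpace.toDual_apply_apply, inner_add_left, real_inner_smul_left,
      inner_stdv_left, ContinuousLinearMap.add_apply, ContinuousLinearMap.coe_smul',
      Pi.smul_apply, smul_eq_mul]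
  have hgrads : ∀ s : ℝ, gradient (fun y => u y + s * (y i * u y)) =ᶠ[nhds p]
      (fun y => gradient u y + s • (y i • gradient u y + u y • stdv (n+1) i)) := by
    intro s
    filter_upwards [hmem] with y hy
    exact (hgs s y hy).gradient
  have hgradp : ∀ s : ℝ, grad (fun y => u y + s * (y i * u y)) p
      = gradient u p + s • (p i • gradient u p + u p • stdv (n+1) i) :=
    fun s => (hgs s p hpU).gradient
  have hhv : ∀ (s : ℝ) (z : Euc (n+1)), hessVec (fun y => u y + s * (y i * u y)) p z
      = fderiv ℝ (gradient u) p z + s • (p i • fderiv ℝ (gradient u) p z + z i • gradient u p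
          + ⟪gradient u p, z⟫ • stdv (n+1) i) := by
    intro s z
    have hfd : HasFDerivAt
        (fun y : Euc (n+1) => gradient u y + s • (y i • gradient u y + u y • stdv (n+1) i))
        (fderiv ℝ (gradient u) p + s • (p i • fderiv ℝ (gradient u) p
            + (InnerProductSpace.toDual ℝ (Euc (n+1)) (stdv (n+1) i)).smulRight (gradient u p)
          + (InnerProductSpace.toDual ℝ (Euc (n+1)) (gradient u p)).smulRight (stdv (n+1) i)))
        p :=
      hDgFD.add ((((hasFDerivAt_coord i p).smul hDgFD).add
        ((hdu p hpU).smul_const (stdv (n+1) i))).const_smul s)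
    have heq : hessVec (fun y => u y + s * (y i * u y)) p z
        = fderiv ℝ (fun y : Euc (n+1) =>
            gradient u y + s • (y i • gradient u y + u y • stdv (n+1) i)) p z := by
      show fderiv ℝ (gradient (fun y => u y + s * (y i * u y))) p z = _
      rw [(hgrads s).fderiv_eq]
    rw [heq, hfd.fderiv]
    simp only [ContinuousLinearMap.add_apply, ContinuousLinearMap.coe_smul', Pi.smul_apply,
      ContinuousLinearMap.smulRight_apply, InnerProductSpace.toDual_apply_apply, inner_stdv_left]
  -- scalar expansions
  have hetaDs : ∀ s : ℝ, etaD (fun y => u y + s * (y i * u y)) p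
      = ⟪p, gradient u p⟫ + s * (p i * ⟪p, gradient u p⟫ + u p * p i) := by
    intro s
    show ⟪p, grad (fun y => u y + s * (y i * u y)) p⟫ = _
    rw [hgradp s]
    simp only [inner_add_right, real_inner_smul_right, inner_stdv_right]
  have hginn : ∀ s : ℝ, ⟪grad (fun y => u y + s * (y i * u y)) p, p⟫
      = ⟪p, gradient u p⟫ + s * (p i * ⟪p, gradient u p⟫ + u p * p i) := by
    intro s; rw [real_inner_comm]; exact hetaDs s
  have hnorms : ∀ s : ℝ, ‖grad (fun y => u y + s * (y i * u y)) p‖^2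
      = ‖gradient u p‖^2 + s * (2*(p i * ‖gradient u p‖^2 + u p * gradient u p i))
        + s^2 * ((p i)^2 * ‖gradient u p‖^2 + 2*(p i * (u p * gradient u p i)) + (u p)^2) := by
    intro s
    rw [← real_inner_self_eq_norm_sq, hgradp s]
    simp only [inner_add_left, inner_add_right, real_inner_smul_left, real_inner_smul_right,
      inner_stdv_left, inner_stdv_right]
    simp only [real_inner_self_eq_norm_sq]
    simp [stdv, EuclideanSpace.single_apply]
    ring
  have hhesss : ∀ s : ℝ, hess (fun y => u y + s * (y i * u y)) p p p
      = ⟪fderiv ℝ (gradient u) p p, p⟫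
        + s * (p i * ⟪fderiv ℝ (gradient u) p p, p⟫ + 2*(p i * ⟪p, gradient u p⟫)) := by
    intro s
    show ⟪hessVec (fun y => u y + s * (y i * u y)) p p, p⟫ = _
    rw [hhv s p]
    simp only [inner_add_left, real_inner_smul_left, inner_stdv_left]
    rw [real_inner_comm (gradient u p) p]
    ring
  have hsumlap : lap u p
      = ∑ j, ⟪fderiv ℝ (gradient u) p (stdv (n+1) j), stdv (n+1) j⟫ := rfl
  have hlaps : ∀ s : ℝ, lap (fun y => u y + s * (y i * u y)) p
      = lap u p + s * (p i * lap u p + 2 * gradient u p i) := by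
    intro s
    show (∑ j, ⟪hessVec (fun y => u y + s * (y i * u y)) p (stdv (n+1) j), stdv (n+1) j⟫) = _
    have hterm : ∀ j : Fin (n+1),
        ⟪hessVec (fun y => u y + s * (y i * u y)) p (stdv (n+1) j), stdv (n+1) j⟫
        = ⟪fderiv ℝ (gradient u) p (stdv (n+1) j), stdv (n+1) j⟫
          + s * (p i * ⟪fderiv ℝ (gradient u) p (stdv (n+1) j), stdv (n+1) j⟫)
          + s * (stdv (n+1) j i * gradient u p j + gradient u p j * stdv (n+1) i j) := by
      intro j
      rw [hhv s (stdv (n+1) j)]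
      simp only [inner_add_left, real_inner_smul_left, inner_stdv_right]
      ring
    rw [Finset.sum_congr rfl (fun j _ => hterm j)]
    rw [Finset.sum_add_distrib, Finset.sum_add_distrib, ← Finset.mul_sum, ← Finset.mul_sum,
      ← Finset.mul_sum, Finset.sum_add_distrib, sum_delta_mul, sum_mul_delta, ← hsumlap]
    ring
  -- abbreviations
  set A := u p with hA
  set P := p i with hP
  set E : ℝ := ⟪p, gradient u p⟫ with hE
  set Q : ℝ := ⟪fderiv ℝ (gradient u) p p, p⟫ with hQ
  set GI := gradient u p i with hGI
  set NG := ‖gradient u p‖ with hNG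
  set LL := lap u p with hLL
  set HB0 : ℝ := E + (((n:ℝ)-3)/4) * A with hHB0
  set H1 : ℝ := P*E + A*P + (((n:ℝ)-3)/4)*(P*A) with hH1
  set TT0 : ℝ := (-(((n:ℝ)-3)/4)*A*LL - (((n:ℝ)+1)/4)*NG^2 + (1/2)*NG^2)
      + (((n:ℝ)-3)/4)*A*Q - (((n:ℝ)+1)/4)*(E*E) with hTT0
  set TT1 : ℝ := (-(((n:ℝ)-3)/4)*(P*A*LL + A*(P*LL+2*GI))
        - (((n:ℝ)+1)/4)*(2*(P*NG^2+A*GI)))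
      + (1/2)*(2*(P*NG^2+A*GI)) + (((n:ℝ)-3)/4)*(P*A*Q + A*(P*Q+2*(P*E)))
      - (((n:ℝ)+1)/4)*(2*E*(P*E+A*P)) with hTT1
  set TT2 : ℝ := (-(((n:ℝ)-3)/4)*((P*A)*(P*LL+2*GI))
        - (((n:ℝ)+1)/4)*(P^2*NG^2 + 2*(P*(A*GI)) + A^2))
      + (1/2)*(P^2*NG^2 + 2*(P*(A*GI)) + A^2)
      + (((n:ℝ)-3)/4)*((P*A)*(P*Q+2*(P*E))) - (((n:ℝ)+1)/4)*((P*E+A*P)^2) with hTT2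
  have hB3 : ∀ s : ℝ, B3 n (fun y => u y + s * (y i * u y)) p
      = (HB0 + s*H1) * (TT0 + s*TT1 + s^2*TT2) + ((n:ℝ)/3)*(HB0 + s*H1)^3 := by
    intro s
    simp only [B3, T1b, sigma1, Hb]
    rw [hetaDs s, hginn s, hnorms s, hhesss s, hlaps s, hpp]
    simp only [← hA, ← hP, ← hE, ← hQ, ← hGI, ← hNG, ← hLL]
    rw [hHB0, hH1, hTT0, hTT1, hTT2]
    ring
  have h00 : (fun y => u y + (0:ℝ) * (y i * u y)) = u := by funext y; ring
  have hB30 : B3 n u p = HB0 * TT0 + ((n:ℝ)/3) * HB0^3 := by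
    have h := hB3 0
    rw [h00] at h
    rw [h]; ring
  have hderiv : deriv (fun s : ℝ => B3 n (fun y => u y + s * (y i * u y)) p) 0
      = H1 * TT0 + HB0 * TT1 + (n:ℝ) * HB0^2 * H1 := by
    have hfun : (fun s : ℝ => B3 n (fun y => u y + s * (y i * u y)) p)
        = fun s : ℝ => (HB0 + s*H1) * (TT0 + s*TT1 + s^2*TT2) + ((n:ℝ)/3)*(HB0 + s*H1)^3 :=
      funext hB3
    rw [hfun]
    have hder : HasDerivAt
        (fun s : ℝ => (HB0 + s*H1) * (TT0 + s*TT1 + s^2*TT2) + ((n:ℝ)/3)*(HB0 + s*H1)^3)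
        (H1 * (TT0 + (0:ℝ)*TT1 + (0:ℝ)^2*TT2) + (HB0 + (0:ℝ)*H1) * TT1
          + ((n:ℝ)/3) * (((3:ℕ):ℝ) * (HB0 + (0:ℝ)*H1)^(3-1) * H1)) 0 :=
      ((hasDerivAt_affine15 HB0 H1).mul (hasDerivAt_quad15 TT0 TT1 TT2)).add
        (((hasDerivAt_affine15 HB0 H1).pow 3).const_mul ((n:ℝ)/3))
    rw [hder.deriv]
    push_cast
    ring
  have hT1rw : T1b n u p p p = TT0 := by
    simp only [T1b, sigma1, hess, hessVec, grad, hpp]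
    rw [real_inner_comm p (gradient u p)]
    simp only [← hA, ← hE, ← hQ, ← hNG, ← hLL]
    try rw [hTT0]
    try ring
  have hHbrw : Hb n u p = HB0 := by
    simp only [Hb, etaD, grad]
    try simp only [← hA, ← hE]
    try rw [hHB0]
    try ring
  have htgrw : ⟪tgrad u p, stdv (n+1) i - P • p⟫ = GI - P * E := by
    simp only [tgrad, etaD, grad]
    simp only [inner_sub_left, inner_sub_right, real_inner_smul_left, real_inner_smul_right,
      inner_stdv_left, inner_stdv_right, hpp]
    rw [real_inner_comm p (gradient u p)]
    simp only [← hP, ← hE, ← hGI]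
    ring
  rw [hderiv, hB30, hT1rw, hHbrw, htgrw]
  rw [hHB0, hH1, hTT0, hTT1]
  ring
end
end
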